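/- arXiv:2406.08994 — 6 statements merged into one kernel-verified Lean document; each statement's English description precedes it below -/
import Mathlib

section
/- Let J, R ∈ ℝⁿˣⁿ with J = −Jᵀ, R = Rᵀ ≥ 0, partitioned into blocks of sizes n₁, n₂ with R = diag(R₁₁, 0) where R₁₁ > 0, and J = [[J₁₁, J₁₂],[−J₁₂ᵀ, J₂₂]]. Then J − R is nonsingular if and only if rank [ −J₁₂ᵀ , J₂₂ ] = n₂. -/
/-!
A skew-symmetric `J` contributes nothing to the quadratic form, so `(J - R) v = 0` gives
`vᵀ R v = vᵀ J v = 0`, hence `R v = 0` because `R ⪰ 0`, and then `J v = 0`: the kernel of `J - R`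
is `ker J ∩ ker R`. As `R₁₁ ≻ 0`, the kernel of `R` consists of the vectors `(0, y)`, and by
skew-symmetry again `J (0, y) = -(yᵀ [-J₁₂ᵀ, J₂₂])ᵀ`. So `J - R` is nonsingular iff the rows of
`[-J₁₂ᵀ, J₂₂]` are linearly independent.
-/

open Matrix

namespace Matrix

variable {m n : Type*} [Fintype m] [Fintype n]

theorem dotProduct_mulVec_self_eq_zero_of_transpose_eq_neg {α : Type*} [CommRing α]
    [IsAddTorsionFree α] {J : Matrix n n α} (hJ : Jᵀ = -J) (v : n → α) :
    v ⬝ᵥ J *ᵥ v = 0 := by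
  rw [← self_eq_neg]
  conv_lhs => rw [dotProduct_mulVec, ← mulVec_transpose, hJ, neg_mulVec, neg_dotProduct,
    dotProduct_comm]

theorem isUnit_sub_iff_forall_mulVec_eq_zero [DecidableEq n] {J R : Matrix n n ℝ}
    (hJ : Jᵀ = -J) (hR : R.PosSemidef) :
    IsUnit (J - R) ↔ ∀ v, R *ᵥ v = 0 → J *ᵥ v = 0 → v = 0 := by
  rw [← mulVec_injective_iff_isUnit, ← coe_mulVecLin, injective_iff_map_eq_zero]
  refine ⟨fun h v hRv hJv => h v (by simp [hRv, hJv]), fun h v hv => ?_⟩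
  rw [mulVecLin_apply, sub_mulVec, sub_eq_zero] at hv
  have hRv : R *ᵥ v = 0 := by
    rw [← hR.dotProduct_mulVec_zero_iff, star_trivial, ← hv,
      dotProduct_mulVec_self_eq_zero_of_transpose_eq_neg hJ]
  exact h v hRv (hv.trans hRv)

theorem fromBlocks_zero_mulVec_eq_zero_iff {R : Type*} [Semiring R] {A : Matrix m m R}
    (hA : Function.Injective A.mulVec) {v : m ⊕ n → R} :
    (fromBlocks A 0 0 0 : Matrix (m ⊕ n) (m ⊕ n) R) *ᵥ v = 0 ↔
      v ∈ Set.range (Sum.elim (0 : m → R)) := by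
  obtain ⟨x, y, rfl⟩ : ∃ x y, v = Sum.elim x y := ⟨_, _, (Sum.elim_comp_inl_inr v).symm⟩
  simp [fromBlocks_mulVec, ← Sum.elim_zero_zero, Sum.elim_eq_iff, hA.eq_iff' (mulVec_zero A),
    eq_comm]

theorem sumElim_zero_vecMul_fromBlocks {α l o : Type*} [Semiring α] [Fintype o]
    (A : Matrix m l α) (B : Matrix m o α) (C : Matrix n l α) (D : Matrix n o α) (y : n → α) :
    Sum.elim 0 y ᵥ* fromBlocks A B C D = y ᵥ* fromCols C D := by
  rw [vecMul_fromBlocks, vecMul_fromCols]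
  simp

theorem rank_eq_card_iff_forall_vecMul_eq_zero {K : Type*} [Field K] (M : Matrix m n K) :
    M.rank = Fintype.card m ↔ ∀ y, y ᵥ* M = 0 → y = 0 := by
  rw [rank_eq_finrank_span_row, ← Set.finrank, eq_comm,
    ← linearIndependent_iff_card_eq_finrank_span, ← vecMul_injective_iff]
  exact injective_iff_map_eq_zero M.vecMulLinear

end Matrix

/-- Lemma 2.1 (ii): J - R is nonsingular iff rank [-J₁₂ᵀ, J₂₂] = n₂. -/
theorem JminusR_nonsingular_iff_rank
    {n₁ n₂ : ℕ}
    (J₁₁ : Matrix (Fin n₁) (Fin n₁) ℝ) (J₁₂ : Matrix (Fin n₁) (Fin n₂) ℝ)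
    (J₂₂ : Matrix (Fin n₂) (Fin n₂) ℝ)
    (R₁₁ : Matrix (Fin n₁) (Fin n₁) ℝ)
    (J : Matrix (Fin n₁ ⊕ Fin n₂) (Fin n₁ ⊕ Fin n₂) ℝ)
    (R : Matrix (Fin n₁ ⊕ Fin n₂) (Fin n₁ ⊕ Fin n₂) ℝ)
    (hJdef : J = fromBlocks J₁₁ J₁₂ (-J₁₂ᵀ) J₂₂)
    (hRdef : R = fromBlocks R₁₁ 0 0 0)
    (hJ : Jᵀ = -J) (hR : R.PosSemidef) (hR11 : R₁₁.PosDef) :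
    IsUnit (J - R) ↔ (fromCols (-J₁₂ᵀ) J₂₂).rank = n₂ := by
  have hker : ∀ v, R *ᵥ v = 0 ↔ v ∈ Set.range (Sum.elim (0 : Fin n₁ → ℝ)) := fun v => by
    rw [hRdef, fromBlocks_zero_mulVec_eq_zero_iff (mulVec_injective_iff_isUnit.2 hR11.isUnit)]
  have hrow : ∀ y, y ᵥ* fromCols (-J₁₂ᵀ) J₂₂ = -(J *ᵥ Sum.elim 0 y) := fun y => by
    rw [← sumElim_zero_vecMul_fromBlocks J₁₁ J₁₂, ← hJdef, ← mulVec_transpose, hJ, neg_mulVec]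
  have hrank := rank_eq_card_iff_forall_vecMul_eq_zero (fromCols (-J₁₂ᵀ) J₂₂)
  rw [Fintype.card_fin] at hrank
  rw [isUnit_sub_iff_forall_mulVec_eq_zero hJ hR, hrank]
  simp only [hker, hrow, neg_eq_zero, Set.forall_mem_range,
    Sum.elim_injective'.eq_iff' Sum.elim_zero_zero]
end

section
/- Let E, J, R ∈ ℝⁿˣⁿ and B ∈ ℝⁿˣᵐ with E = Eᵀ ≥ 0, J = −Jᵀ, R = Rᵀ ≥ 0. Suppose rank [ sE − (J−R) , B ] = n for all s on the imaginary axis. Let F ∈ ℝᵐˣⁿ be such that R̃ := R − ½(BF + FᵀBᵀ) ≥ 0 and rank R̃ = rank [R, B]. Then the pencil sE − (J − R + BF) has all its finite eigenvalues in the open left half plane. -/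
/-!
If `λ E x = (J - R + B F) x` with `x ≠ 0`, split `J - R + B F = J̃ - R̃` with `J̃` skew-symmetric
and `R̃ = R - ½ (B F + Fᵀ Bᵀ)`. The real part of `x* (λ E) x` is `Re λ · x* E x = -x* R̃ x`, so
`Re λ ≥ 0` forces `R̃ x = 0` and `Re λ · E x = 0`. The rank condition makes `ker R̃` equal to
`ker Rᵀ ∩ ker Bᵀ`, hence `R x = 0`, `Bᵀ x = 0`, `B F x = 0` and `λ E x = J x`. At the imaginary
point `s = -i Im λ` this gives `xᵀ [s E - (J - R), B] = 0`, contradicting the rank hypothesis.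
-/

open Matrix

/-- Complexification of a real matrix. -/
noncomputable def cm {a b : Type*} (M : Matrix a b ℝ) : Matrix a b ℂ :=
  M.map (algebraMap ℝ ℂ)

open ComplexOrder

section Rank

variable {K ι κ μ : Type*} [Field K] [Fintype ι]

theorem Matrix.vecMul_injective_of_rank_eq_card [Fintype κ] {M : Matrix ι κ K}
    (h : M.rank = Fintype.card ι) : Function.Injective M.vecMul :=
  vecMul_injective_iff.mpr <| linearIndependent_iff_card_eq_finrank_span.mpr <| by
    rw [← h, rank_eq_finrank_span_row]; rfl

theorem Matrix.eq_zero_of_vecMul_fromCols_eq_zero [Fintype κ] [Fintype μ] {A : Matrix ι κ K}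
    {B : Matrix ι μ K} (h : (fromCols A B).rank = Fintype.card ι) {x : ι → K}
    (hA : x ᵥ* A = 0) (hB : x ᵥ* B = 0) : x = 0 :=
  vecMul_injective_of_rank_eq_card h <| by simp [hA, hB]

theorem Matrix.ker_mulVecLin_eq_of_le_of_rank_eq [Fintype κ] {A : Matrix μ ι K}
    {C : Matrix κ ι K} (hle : LinearMap.ker A.mulVecLin ≤ LinearMap.ker C.mulVecLin)
    (h : A.rank = C.rank) : LinearMap.ker A.mulVecLin = LinearMap.ker C.mulVecLin := by
  refine Submodule.eq_of_le_of_finrank_eq hle ?_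
  have hA := LinearMap.finrank_range_add_finrank_ker A.mulVecLin
  have hC := LinearMap.finrank_range_add_finrank_ker C.mulVecLin
  unfold rank at h
  omega

end Rank

section Dissipation

variable {ι : Type*} [Fintype ι]

theorem Matrix.re_star_dotProduct_mulVec_eq_zero {J : Matrix ι ι ℂ} (hJ : Jᴴ = -J)
    (x : ι → ℂ) : (star x ⬝ᵥ J *ᵥ x).re = 0 := by
  have h : star (star x ⬝ᵥ J *ᵥ x) = -(star x ⬝ᵥ J *ᵥ x) := by
    rw [← star_dotProduct_star, star_star, star_mulVec, ← dotProduct_mulVec, hJ, neg_mulVec,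
      dotProduct_neg]
  have := congrArg Complex.re h
  simp only [Complex.star_def, Complex.conj_re, Complex.neg_re] at this
  linarith

theorem mulVec_eq_zero_of_smul_mulVec_eq_of_re_nonneg {E J R : Matrix ι ι ℂ}
    (hE : E.PosSemidef) (hJ : Jᴴ = -J) (hR : R.PosSemidef) {s : ℂ} (hs : 0 ≤ s.re)
    {x : ι → ℂ} (hx : s • (E *ᵥ x) = (J - R) *ᵥ x) :
    R *ᵥ x = 0 ∧ (s.re : ℂ) • (E *ᵥ x) = 0 := by
  set e := star x ⬝ᵥ E *ᵥ x
  set r := star x ⬝ᵥ R *ᵥ x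
  obtain ⟨he, he_im⟩ := Complex.nonneg_iff.mp (hE.dotProduct_mulVec_nonneg x)
  obtain ⟨hr, hr_im⟩ := Complex.nonneg_iff.mp (hR.dotProduct_mulVec_nonneg x)
  have balance : s.re * e.re + r.re = 0 := by
    have h : s * e = star x ⬝ᵥ J *ᵥ x - r := by
      rw [← smul_eq_mul, ← dotProduct_smul, hx, sub_mulVec, dotProduct_sub]
    have := congrArg Complex.re h
    rw [Complex.mul_re, ← he_im, Complex.sub_re, re_star_dotProduct_mulVec_eq_zero hJ] at this
    linarith
  have hse : s.re * e.re = 0 := by nlinarith [mul_nonneg hs he]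
  have hr0 : r = 0 := Complex.ext (by rw [Complex.zero_re]; linarith) hr_im.symm
  refine ⟨(hR.dotProduct_mulVec_zero_iff x).mp hr0, ?_⟩
  rcases mul_eq_zero.mp hse with hs0 | he0
  · simp [hs0]
  · rw [(hE.dotProduct_mulVec_zero_iff x).mp (Complex.ext he0 he_im.symm), smul_zero]

end Dissipation

section Complexification

variable {ι κ μ : Type*}

lemma cm_add (M N : Matrix ι κ ℝ) : cm (M + N) = cm M + cm N := by
  ext; simp [cm]

lemma cm_sub (M N : Matrix ι κ ℝ) : cm (M - N) = cm M - cm N := by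
  ext; simp [cm]

lemma cm_neg (M : Matrix ι κ ℝ) : cm (-M) = -cm M := by
  ext; simp [cm]

lemma cm_mul [Fintype κ] (M : Matrix ι κ ℝ) (N : Matrix κ μ ℝ) : cm (M * N) = cm M * cm N :=
  Matrix.map_mul

lemma cm_transpose (M : Matrix ι κ ℝ) : cm Mᵀ = (cm M)ᵀ := rfl

lemma cm_conjTranspose (M : Matrix ι κ ℝ) : (cm M)ᴴ = (cm M)ᵀ := by
  ext; simp [cm]

lemma vecMul_cm [Fintype ι] (x : ι → ℂ) (M : Matrix ι κ ℝ) : x ᵥ* cm M = cm Mᵀ *ᵥ x := by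
  rw [cm_transpose, mulVec_transpose]

open scoped MatrixOrder in
lemma cm_posSemidef [Fintype ι] {M : Matrix ι ι ℝ} (hM : M.PosSemidef) : (cm M).PosSemidef := by
  classical
  obtain ⟨X, hX, -, hXX⟩ := CFC.exists_sqrt_of_isSelfAdjoint_of_quasispectrumRestricts
    hM.isHermitian (QuasispectrumRestricts.nnreal_of_nonneg hM.nonneg)
  have hM' : M = Xᵀ * X := by
    rw [← hXX, ← conjTranspose_eq_transpose_of_trivial, ← star_eq_conjTranspose, hX.star_eq]
  rw [hM', cm_mul, cm_transpose, ← cm_conjTranspose]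
  exact posSemidef_conjTranspose_mul_self _

lemma cm_mulVec [Fintype κ] (M : Matrix ι κ ℝ) (x : κ → ℂ) :
    cm M *ᵥ x = fun i ↦ ⟨(M *ᵥ fun j ↦ (x j).re) i, (M *ᵥ fun j ↦ (x j).im) i⟩ := by
  funext i
  apply Complex.ext <;> simp [cm, mulVec, dotProduct, Complex.re_sum, Complex.im_sum]

lemma cm_mulVec_eq_zero_iff [Fintype κ] (M : Matrix ι κ ℝ) (x : κ → ℂ) :
    cm M *ᵥ x = 0 ↔ M *ᵥ (fun j ↦ (x j).re) = 0 ∧ M *ᵥ (fun j ↦ (x j).im) = 0 := by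
  simp only [cm_mulVec, funext_iff, Pi.zero_apply, Complex.ext_iff, Complex.zero_re,
    Complex.zero_im, forall_and]

lemma cm_mulVec_eq_zero_of_imp [Fintype κ] {A : Matrix ι κ ℝ} {C : Matrix μ κ ℝ}
    (h : ∀ v, A *ᵥ v = 0 → C *ᵥ v = 0) {x : κ → ℂ} (hx : cm A *ᵥ x = 0) : cm C *ᵥ x = 0 := by
  rw [cm_mulVec_eq_zero_iff] at hx ⊢
  exact ⟨h _ hx.1, h _ hx.2⟩

end Complexification

section Feedback

variable {ι κ : Type*} [Fintype κ]

noncomputable def closedLoopDissipation (R : Matrix ι ι ℝ) (B : Matrix ι κ ℝ)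
    (F : Matrix κ ι ℝ) : Matrix ι ι ℝ :=
  R - (1 / 2 : ℝ) • (B * F + Fᵀ * Bᵀ)

noncomputable def closedLoopStructure (J : Matrix ι ι ℝ) (B : Matrix ι κ ℝ)
    (F : Matrix κ ι ℝ) : Matrix ι ι ℝ :=
  J + (1 / 2 : ℝ) • (B * F - Fᵀ * Bᵀ)

lemma sub_add_mul_eq_closedLoopStructure_sub_closedLoopDissipation (J R : Matrix ι ι ℝ)
    (B : Matrix ι κ ℝ) (F : Matrix κ ι ℝ) :
    J - R + B * F = closedLoopStructure J B F - closedLoopDissipation R B F := by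
  unfold closedLoopStructure closedLoopDissipation
  module

lemma closedLoopStructure_transpose {J : Matrix ι ι ℝ} (hJ : Jᵀ = -J) (B : Matrix ι κ ℝ)
    (F : Matrix κ ι ℝ) : (closedLoopStructure J B F)ᵀ = -closedLoopStructure J B F := by
  unfold closedLoopStructure
  rw [transpose_add, transpose_smul, transpose_sub, transpose_mul, transpose_mul,
    transpose_transpose, transpose_transpose, hJ]
  module

variable [Fintype ι]

lemma closedLoopDissipation_mulVec {R : Matrix ι ι ℝ} {B : Matrix ι κ ℝ} (F : Matrix κ ι ℝ)
    {v : ι → ℝ} (hR : R *ᵥ v = 0) (hB : Bᵀ *ᵥ v = 0) :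
    closedLoopDissipation R B F *ᵥ v = -(1 / 2 : ℝ) • ((B * F) *ᵥ v) := by
  rw [closedLoopDissipation, sub_mulVec, smul_mulVec, add_mulVec, hR, ← mulVec_mulVec (N := Bᵀ),
    hB, mulVec_zero, add_zero, zero_sub, neg_smul]

lemma closedLoopDissipation_mulVec_eq_zero {R : Matrix ι ι ℝ} {B : Matrix ι κ ℝ}
    {F : Matrix κ ι ℝ} (hR : R.IsSymm) (hRt : (closedLoopDissipation R B F).PosSemidef)
    (hrank : (closedLoopDissipation R B F).rank = (fromCols R B).rank) {v : ι → ℝ}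
    (hv : closedLoopDissipation R B F *ᵥ v = 0) :
    R *ᵥ v = 0 ∧ Bᵀ *ᵥ v = 0 ∧ (B * F) *ᵥ v = 0 := by
  have hker : ∀ w, (fromCols R B)ᵀ *ᵥ w = 0 ↔ R *ᵥ w = 0 ∧ Bᵀ *ᵥ w = 0 := by
    intro w
    rw [transpose_fromCols, fromRows_mulVec, hR.eq, ← Sum.elim_zero_zero, Sum.elim_eq_iff]
  have hle : LinearMap.ker (fromCols R B)ᵀ.mulVecLin ≤
      LinearMap.ker (closedLoopDissipation R B F).mulVecLin := by
    intro w hw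
    obtain ⟨hRw, hBw⟩ := (hker w).mp hw
    refine (hRt.dotProduct_mulVec_zero_iff w).mp ?_
    rw [closedLoopDissipation_mulVec F hRw hBw, star_trivial, dotProduct_smul,
      ← mulVec_mulVec, dotProduct_mulVec, ← mulVec_transpose, hBw, zero_dotProduct, smul_zero]
  have hRB : R *ᵥ v = 0 ∧ Bᵀ *ᵥ v = 0 := by
    rw [← hker, ← mulVecLin_apply, ← LinearMap.mem_ker,
      ker_mulVecLin_eq_of_le_of_rank_eq hle (by rw [rank_transpose, hrank]),
      LinearMap.mem_ker, mulVecLin_apply, hv]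
  refine ⟨hRB.1, hRB.2, ?_⟩
  simpa [closedLoopDissipation_mulVec F hRB.1 hRB.2] using hv

end Feedback

/-- Lemma 2.2: stabilization by a structure-preserving feedback. -/
theorem feedback_asymptotic_stability
    {n m : ℕ}
    (E J R : Matrix (Fin n) (Fin n) ℝ) (B : Matrix (Fin n) (Fin m) ℝ)
    (hE : E.PosSemidef) (hJ : Jᵀ = -J) (hR : R.PosSemidef)
    (hstab : ∀ s : ℂ, s.re = 0 →
      (fromCols (s • cm E - cm (J - R)) (cm B)).rank = n)
    (F : Matrix (Fin m) (Fin n) ℝ)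
    (hRt : (R - (1 / 2 : ℝ) • (B * F + Fᵀ * Bᵀ)).PosSemidef)
    (hrank : (R - (1 / 2 : ℝ) • (B * F + Fᵀ * Bᵀ)).rank = (fromCols R B).rank) :
    ∀ s : ℂ, (s • cm E - cm (J - R + B * F)).det = 0 → s.re < 0 := by
  intro s hdet
  by_contra! hs
  obtain ⟨x, hx0, hx⟩ := exists_mulVec_eq_zero_iff.mpr hdet
  rw [sub_mulVec, smul_mulVec, sub_eq_zero] at hx
  have heig : s • (cm E *ᵥ x) =
      (cm (closedLoopStructure J B F) - cm (closedLoopDissipation R B F)) *ᵥ x := by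
    rwa [← cm_sub, ← sub_add_mul_eq_closedLoopStructure_sub_closedLoopDissipation]
  have hJt : (cm (closedLoopStructure J B F))ᴴ = -cm (closedLoopStructure J B F) := by
    rw [cm_conjTranspose, ← cm_transpose, closedLoopStructure_transpose hJ, cm_neg]
  obtain ⟨hRtx, hEx⟩ := mulVec_eq_zero_of_smul_mulVec_eq_of_re_nonneg (cm_posSemidef hE) hJt
    (cm_posSemidef hRt) hs heig
  have hRsymm := isHermitian_iff_isSymm.mp hR.1
  have hker {v} := closedLoopDissipation_mulVec_eq_zero hRsymm hRt hrank (v := v)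
  have hRx := cm_mulVec_eq_zero_of_imp (fun _ hv ↦ (hker hv).1) hRtx
  have hBx := cm_mulVec_eq_zero_of_imp (fun _ hv ↦ (hker hv).2.1) hRtx
  have hBFx := cm_mulVec_eq_zero_of_imp (fun _ hv ↦ (hker hv).2.2) hRtx
  have hJx : s • (cm E *ᵥ x) = cm J *ᵥ x := by
    rw [hx, cm_add, cm_sub, add_mulVec, sub_mulVec, hRx, hBFx, sub_zero, add_zero]
  refine hx0 (eq_zero_of_vecMul_fromCols_eq_zero
    ((hstab ⟨0, -s.im⟩ rfl).trans (Fintype.card_fin n).symm) ?_ ?_)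
  · have hshift : (⟨0, -s.im⟩ : ℂ) + s = s.re := by apply Complex.ext <;> simp
    rw [vecMul_sub, vecMul_smul, vecMul_cm, vecMul_cm, (isHermitian_iff_isSymm.mp hE.1).eq,
      transpose_sub, hJ, hRsymm.eq, cm_sub, cm_neg, sub_mulVec, hRx, neg_mulVec, ← hJx, sub_zero,
      sub_neg_eq_add, ← add_smul, hshift, hEx]
  · rw [vecMul_cm, hBx]
end

section
/- Let E, J, R ∈ ℝⁿˣⁿ and B ∈ ℝⁿˣᵐ with E = Eᵀ ≥ 0, J = −Jᵀ, R = Rᵀ ≥ 0. Suppose rank [ E , (J−R)S∞(E) , B ] = n, where S∞(E) is a matrix whose columns form an orthonormal basis of the kernel of E. Let F ∈ ℝᵐˣⁿ satisfy R̃ := R − ½(BF + FᵀBᵀ) ≥ 0 and rank R̃ = rank [R, B]. Then the pencil sE − (J − R + BF) is regular and of index at most one. -/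
/-!
Write `A = J - R + B F` and `R̃ = R - ½ (B F + Fᵀ Bᵀ)`. As `J` is skew, `xᵀ A x = -xᵀ R̃ x`, so if
`S∞(E)ᵀ A S∞(E) z = 0` then `x = S∞(E) z` lies in `ker R̃`, which positive semidefiniteness and the
rank condition identify with `ker [R, B]ᵀ`. Hence `Rx = 0`, `Bᵀx = 0`, `BFx = 0`, so `Ax = Jx` and
`x` is a left null vector of `[E, (J - R) S∞(E), B]`, i.e. `x = 0`: the compression
`A₂₂ = S∞(E)ᵀ A S∞(E)` is invertible.

Completing `S∞(E)` by a basis `U` of `range E` to an invertible `P = [U, S∞(E)]`, the pencil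
`Pᵀ (sE - A) P` has blocks `sE₁ - A₁₁, -A₁₂, -A₂₁, -A₂₂` with `E₁ = Uᵀ E U` positive definite. The
Schur complement of `-A₂₂` is `sE₁ - S` with `S` constant, so up to a nonzero constant factor
`det (sE - A) = det (sE₁ - S)`, whose leading coefficient `det E₁` sits in degree `rank E`.
-/

open Matrix Polynomial

namespace Matrix

section Pencil

variable {K ι ι' r κ : Type*} [Field K]

noncomputable def pencil (E A : Matrix ι ι K) : Matrix ι ι K[X] := (X : K[X]) • E.map C - A.map C

variable [Fintype ι]

theorem pencil_transpose_mul_mul [Fintype ι'] (P : Matrix ι ι' K) (E A : Matrix ι ι K) :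
    (P.map C)ᵀ * pencil E A * P.map C = pencil (Pᵀ * E * P) (Pᵀ * A * P) := by
  simp only [pencil, Matrix.mul_sub, Matrix.sub_mul, Matrix.mul_smul, Matrix.smul_mul,
    ← transpose_map, ← Matrix.map_mul]

variable [DecidableEq ι]

theorem det_pencil_ne_zero_and_natDegree_of_det_ne_zero {E : Matrix ι ι K} (A : Matrix ι ι K)
    (hE : E.det ≠ 0) :
    (pencil E A).det ≠ 0 ∧ (pencil E A).det.natDegree = Fintype.card ι := by
  have hpencil : pencil E A = (X : K[X]) • E.map C + (-A).map C := by
    ext i j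
    simp [pencil, sub_eq_add_neg]
  have hlead := coeff_det_X_add_C_card E (-A)
  have hle := natDegree_det_X_add_C_le E (-A)
  rw [← hpencil] at hlead hle
  refine ⟨fun h0 => hE ?_, le_antisymm hle (le_natDegree_of_ne_zero (hlead ▸ hE))⟩
  rw [← hlead, h0, coeff_zero]

theorem det_pencil_submatrix [Fintype ι'] [DecidableEq ι'] (e : ι' ≃ ι) (E A : Matrix ι ι K) :
    (pencil (E.submatrix e e) (A.submatrix e e)).det = (pencil E A).det := by
  rw [← det_submatrix_equiv_self e (pencil E A)]
  rfl

theorem det_pencil_transpose_mul_mul (P : Matrix ι ι K) (E A : Matrix ι ι K) :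
    (pencil (Pᵀ * E * P) (Pᵀ * A * P)).det = C (P.det ^ 2) * (pencil E A).det := by
  rw [← pencil_transpose_mul_mul, det_mul, det_mul, det_transpose, ← RingHom.mapMatrix_apply,
    ← RingHom.map_det, map_pow]
  ring

theorem exists_det_pencil_transpose_mul_mul [Fintype ι'] [DecidableEq ι'] {P : Matrix ι ι' K}
    (e : ι' ≃ ι) (hP : ∀ w, P *ᵥ w = 0 → w = 0) (E A : Matrix ι ι K) :
    ∃ c ≠ 0, (pencil (Pᵀ * E * P) (Pᵀ * A * P)).det = C c * (pencil E A).det := by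
  set Q := P.submatrix id e.symm
  have hQ : ∀ M : Matrix ι ι K, Qᵀ * M * Q = (Pᵀ * M * P).submatrix e.symm e.symm := fun _ => rfl
  refine ⟨Q.det ^ 2, pow_ne_zero _ ?_, ?_⟩
  · rw [Ne, ← exists_mulVec_eq_zero_iff]
    rintro ⟨v, hv0, hv⟩
    rw [submatrix_mulVec_equiv, Equiv.symm_symm, Function.comp_id] at hv
    have hve := hP _ hv
    exact hv0 (funext fun i => by simpa using congrFun hve (e.symm i))
  · rw [← det_pencil_transpose_mul_mul, hQ, hQ, det_pencil_submatrix]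

theorem det_pencil_fromBlocks [Fintype r] [DecidableEq r] [Fintype κ] [DecidableEq κ]
    (E₁ A₁₁ : Matrix r r K) (A₁₂ : Matrix r κ K) (A₂₁ : Matrix κ r K) (A₂₂ : Matrix κ κ K)
    (hA₂₂ : A₂₂.det ≠ 0) :
    (pencil (fromBlocks E₁ 0 0 0) (fromBlocks A₁₁ A₁₂ A₂₁ A₂₂)).det
      = C (-A₂₂).det * (pencil E₁ (A₁₁ - A₁₂ * A₂₂⁻¹ * A₂₁)).det := by
  let _ : Invertible A₂₂ := invertibleOfIsUnitDet _ (isUnit_iff_ne_zero.mpr hA₂₂)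
  let _ : Invertible (-A₂₂) := invertibleNeg A₂₂
  let _ := Invertible.map (C : K →+* K[X]).mapMatrix (-A₂₂)
  have hblocks : pencil (fromBlocks E₁ 0 0 0) (fromBlocks A₁₁ A₁₂ A₂₁ A₂₂)
      = fromBlocks (pencil E₁ A₁₁) (-A₁₂.map C) (-A₂₁.map C)
          ((C : K →+* K[X]).mapMatrix (-A₂₂)) := by
    ext (i | i) (j | j) <;> simp [pencil]
  rw [hblocks, det_fromBlocks₂₂, ← map_invOf, ← RingHom.map_det]
  congr 2
  simp only [pencil, RingHom.mapMatrix_apply, invOf_neg, invOf_eq_nonsing_inv, Matrix.neg_mul,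
    Matrix.mul_neg, neg_neg, ← Matrix.map_mul, sub_sub]
  congr 1
  ext i j
  simp [sub_eq_add_neg]

end Pencil

section LinearAlgebra

variable {K ι ν ι' : Type*} [Field K] [Fintype ν]

theorem eq_zero_of_vecMul_eq_zero_of_rank_eq_card [Fintype ι] {M : Matrix ι ν K}
    (hM : M.rank = Fintype.card ι) {x : ι → K} (hx : x ᵥ* M = 0) : x = 0 := by
  have hrows : LinearIndependent K M.row :=
    linearIndependent_iff_card_eq_finrank_span.mpr
      (by rw [Set.finrank, ← rank_eq_finrank_span_row, hM])
  exact vecMul_injective_iff.mpr hrows (by simpa using hx)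

theorem ker_mulVecLin_eq_of_le_of_rank_eq_s5 {M : Matrix ι' ν K} {N : Matrix ι ν K}
    (hle : LinearMap.ker M.mulVecLin ≤ LinearMap.ker N.mulVecLin) (hrank : N.rank = M.rank) :
    LinearMap.ker M.mulVecLin = LinearMap.ker N.mulVecLin := by
  refine Submodule.eq_of_le_of_finrank_eq hle ?_
  have hM := M.mulVecLin.finrank_range_add_finrank_ker
  have hN := N.mulVecLin.finrank_range_add_finrank_ker
  have hrank' : Module.finrank K (LinearMap.range N.mulVecLin)
      = Module.finrank K (LinearMap.range M.mulVecLin) := hrank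
  omega

theorem mul_eq_zero_of_range_le_ker [Fintype ι] {M : Matrix ι' ι K} {N : Matrix ι ν K}
    (h : LinearMap.range N.mulVecLin ≤ LinearMap.ker M.mulVecLin) : M * N = 0 :=
  ext_iff_mulVec.mpr fun v => by simpa [← mulVec_mulVec] using h ⟨v, rfl⟩

theorem rank_add_card_eq_card_of_range_eq_ker [Fintype ι] {E : Matrix ι ι K} {N : Matrix ι ν K}
    (hN : LinearMap.range N.mulVecLin = LinearMap.ker E.mulVecLin)
    (hNinj : Function.Injective N.mulVec) :
    E.rank + Fintype.card ν = Fintype.card ι := by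
  have h := E.mulVecLin.finrank_range_add_finrank_ker
  rwa [← hN, LinearMap.finrank_range_of_inj (f := N.mulVecLin) hNinj,
    Module.finrank_fintype_fun_eq_card, Module.finrank_fintype_fun_eq_card] at h

theorem exists_mulVec_injective_range_eq [Fintype ι] (S : Submodule K (ι → K)) :
    ∃ U : Matrix ι (Fin (Module.finrank K S)) K,
      LinearMap.range U.mulVecLin = S ∧ Function.Injective U.mulVec := by
  let f := S.subtype ∘ₗ (Module.finBasis K S).equivFun.symm.toLinearMap
  refine ⟨LinearMap.toMatrix' f, ?_, ?_⟩
  · rw [← Matrix.toLin'_apply', Matrix.toLin'_toMatrix',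
      LinearMap.range_comp_of_range_eq_top _ (LinearEquiv.range _), Submodule.range_subtype]
  · intro a b hab
    rw [LinearMap.toMatrix'_mulVec, LinearMap.toMatrix'_mulVec] at hab
    exact (Module.finBasis K S).equivFun.symm.injective (Subtype.val_injective hab)

theorem eq_zero_of_fromCols_mulVec_eq_zero {r : Type*} [Fintype r] [Fintype ι]
    {E : Matrix ι ι K} {U : Matrix ι r K} {N : Matrix ι ν K} (hEN : E * N = 0)
    (hNinj : Function.Injective N.mulVec) (hEU : ∀ z, E *ᵥ (U *ᵥ z) = 0 → z = 0)
    {w : r ⊕ ν → K} (hw : fromCols U N *ᵥ w = 0) : w = 0 := by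
  rw [fromCols_mulVec] at hw
  have hw₁ : w ∘ Sum.inl = 0 :=
    hEU _ (by simpa [mulVec_add, mulVec_mulVec, hEN] using congrArg (E *ᵥ ·) hw)
  have hw₂ : w ∘ Sum.inr = 0 := hNinj (by
    rw [hw₁, mulVec_zero, zero_add] at hw
    rw [hw, mulVec_zero])
  ext (i | i)
  exacts [congrFun hw₁ i, congrFun hw₂ i]

end LinearAlgebra

section CommSemiring

variable {α ι ν : Type*} [CommSemiring α] [Fintype ι]

theorem transpose_fromCols_mul_fromCols {r : Type*} (U : Matrix ι r α) (N : Matrix ι ν α)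
    (M : Matrix ι ι α) :
    (fromCols U N)ᵀ * M * fromCols U N
      = fromBlocks (Uᵀ * M * U) (Uᵀ * M * N) (Nᵀ * M * U) (Nᵀ * M * N) := by
  rw [transpose_fromCols, fromRows_mul, fromRows_mul_fromCols]

theorem dotProduct_transpose_mul_mul_mulVec [Fintype ν] (U : Matrix ι ν α) (M : Matrix ι ι α)
    (z : ν → α) :
    z ⬝ᵥ (Uᵀ * M * U) *ᵥ z = (U *ᵥ z) ⬝ᵥ M *ᵥ (U *ᵥ z) := by
  rw [Matrix.mul_assoc, ← mulVec_mulVec, dotProduct_mulVec, vecMul_transpose, mulVec_mulVec]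

theorem dotProduct_transpose_mulVec_self (M : Matrix ι ι α) (x : ι → α) :
    x ⬝ᵥ Mᵀ *ᵥ x = x ⬝ᵥ M *ᵥ x := by
  rw [dotProduct_mulVec, vecMul_transpose, dotProduct_comm]

end CommSemiring

theorem eq_zero_of_mem_range_of_mulVec_eq_zero {K ι : Type*} [Field K] [LinearOrder K]
    [IsStrictOrderedRing K] [Fintype ι] {E : Matrix ι ι K} (hE : Eᵀ = E) {v : ι → K}
    (hv : v ∈ LinearMap.range E.mulVecLin) (hEv : E *ᵥ v = 0) : v = 0 := by
  obtain ⟨y, rfl⟩ := hv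
  have hy : y ∈ LinearMap.ker (Eᵀ * E).mulVecLin := by
    rw [LinearMap.mem_ker, mulVecLin_apply, hE, ← mulVec_mulVec]
    exact hEv
  rw [ker_mulVecLin_transpose_mul_self] at hy
  exact hy

section PosSemidef

variable {ι κ : Type*} [Fintype ι] [Fintype κ] [DecidableEq κ] {E : Matrix ι ι ℝ}

theorem PosSemidef.det_transpose_mul_mul_ne_zero (hE : E.PosSemidef) {U : Matrix ι κ ℝ}
    (hU : ∀ z, E *ᵥ (U *ᵥ z) = 0 → z = 0) : (Uᵀ * E * U).det ≠ 0 := by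
  rw [Ne, ← exists_mulVec_eq_zero_iff]
  rintro ⟨z, hz0, hz⟩
  refine hz0 (hU z ((hE.dotProduct_mulVec_zero_iff _).mp ?_))
  rw [star_trivial, ← dotProduct_transpose_mul_mul_mulVec, hz, dotProduct_zero]

theorem det_pencil_ne_zero_and_natDegree_eq_rank [DecidableEq ι] {A : Matrix ι ι ℝ}
    (hE : E.PosSemidef) {N : Matrix ι κ ℝ}
    (hN : LinearMap.range N.mulVecLin = LinearMap.ker E.mulVecLin)
    (hNinj : Function.Injective N.mulVec) (hA : (Nᵀ * A * N).det ≠ 0) :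
    (pencil E A).det ≠ 0 ∧ (pencil E A).det.natDegree = E.rank := by
  obtain ⟨U, hUrange, hUinj⟩ : ∃ U : Matrix ι (Fin E.rank) ℝ,
      LinearMap.range U.mulVecLin = LinearMap.range E.mulVecLin ∧ Function.Injective U.mulVec :=
    exists_mulVec_injective_range_eq _
  have hEsymm : Eᵀ = E := (isHermitian_iff_isSymm.mp hE.isHermitian).eq
  have hEN : E * N = 0 := mul_eq_zero_of_range_le_ker hN.le
  have hNE : Nᵀ * E = 0 := by rw [← hEsymm, ← transpose_mul, hEN, transpose_zero]
  have hEU : ∀ z, E *ᵥ (U *ᵥ z) = 0 → z = 0 := fun z hz => by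
    have hUz : U *ᵥ z ∈ LinearMap.range E.mulVecLin := hUrange ▸ ⟨z, rfl⟩
    exact hUinj (by rw [eq_zero_of_mem_range_of_mulVec_eq_zero hEsymm hUz hz, mulVec_zero])
  have hcard : Fintype.card (Fin E.rank ⊕ κ) = Fintype.card ι := by
    rw [Fintype.card_sum, Fintype.card_fin, rank_add_card_eq_card_of_range_eq_ker hN hNinj]
  obtain ⟨c, hc, hdet⟩ := exists_det_pencil_transpose_mul_mul (Fintype.equivOfCardEq hcard)
    (fun _ => eq_zero_of_fromCols_mulVec_eq_zero hEN hNinj hEU) E A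
  rw [transpose_fromCols_mul_fromCols, transpose_fromCols_mul_fromCols, hNE, Matrix.zero_mul,
    Matrix.zero_mul, Matrix.mul_assoc Uᵀ E N, hEN, Matrix.mul_zero,
    det_pencil_fromBlocks _ _ _ _ _ hA] at hdet
  obtain ⟨hne, hdeg⟩ := det_pencil_ne_zero_and_natDegree_of_det_ne_zero
    (Uᵀ * A * U - Uᵀ * A * N * (Nᵀ * A * N)⁻¹ * (Nᵀ * A * U)) (hE.det_transpose_mul_mul_ne_zero hEU)
  have hA' : (-(Nᵀ * A * N)).det ≠ 0 := by
    rw [det_neg]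
    exact mul_ne_zero (pow_ne_zero _ (by norm_num)) hA
  refine ⟨fun h0 => ?_, ?_⟩
  · rw [h0, mul_zero] at hdet
    exact mul_ne_zero (C_ne_zero.mpr hA') hne hdet
  · have hdeg' := congrArg natDegree hdet
    rw [natDegree_C_mul hA', natDegree_C_mul hc, hdeg, Fintype.card_fin] at hdeg'
    exact hdeg'.symm

end PosSemidef

section Feedback

variable {ι κ μ : Type*} [Fintype ι] [Fintype μ]

noncomputable def feedbackDissipation (R : Matrix ι ι ℝ) (B : Matrix ι μ ℝ) (F : Matrix μ ι ℝ) :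
    Matrix ι ι ℝ :=
  R - (1 / 2 : ℝ) • (B * F + Fᵀ * Bᵀ)

variable {J R : Matrix ι ι ℝ} {B : Matrix ι μ ℝ} {F : Matrix μ ι ℝ}

theorem dotProduct_feedback_mulVec_self (hJ : Jᵀ = -J) (x : ι → ℝ) :
    x ⬝ᵥ (J - R + B * F) *ᵥ x = -(x ⬝ᵥ feedbackDissipation R B F *ᵥ x) := by
  have hJx : x ⬝ᵥ J *ᵥ x = 0 := by
    have h := dotProduct_transpose_mulVec_self J x
    rw [hJ, neg_mulVec, dotProduct_neg] at h
    linarith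
  have hBF : x ⬝ᵥ (Fᵀ * Bᵀ) *ᵥ x = x ⬝ᵥ (B * F) *ᵥ x := by
    rw [← transpose_mul, dotProduct_transpose_mulVec_self]
  simp only [feedbackDissipation, add_mulVec, sub_mulVec, smul_mulVec, dotProduct_add,
    dotProduct_sub, dotProduct_smul, hJx, hBF, smul_eq_mul]
  ring

theorem feedbackDissipation_mulVec (x : ι → ℝ) :
    feedbackDissipation R B F *ᵥ x = R *ᵥ x - (1 / 2 : ℝ) • (B *ᵥ (F *ᵥ x) + Fᵀ *ᵥ (x ᵥ* B)) := by
  rw [feedbackDissipation, sub_mulVec, smul_mulVec, add_mulVec, ← mulVec_mulVec, ← mulVec_mulVec,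
    mulVec_transpose B]

theorem ker_feedbackDissipation (hRt : (feedbackDissipation R B F).PosSemidef)
    (hrank : (feedbackDissipation R B F).rank = (fromCols R B).rank) :
    LinearMap.ker (feedbackDissipation R B F).mulVecLin
      = LinearMap.ker (fromCols R B)ᵀ.mulVecLin := by
  refine (ker_mulVecLin_eq_of_le_of_rank_eq_s5 ?_ (by rw [hrank, rank_transpose])).symm
  intro x hx
  obtain ⟨hxR, hxB⟩ : x ᵥ* R = 0 ∧ x ᵥ* B = 0 := by simpa [funext_iff, Sum.forall] using hx
  rw [LinearMap.mem_ker, mulVecLin_apply, ← hRt.dotProduct_mulVec_zero_iff x, star_trivial]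
  simp only [feedbackDissipation_mulVec, hxB, mulVec_zero, add_zero, dotProduct_sub,
    dotProduct_smul, dotProduct_mulVec, hxR, zero_vecMul, zero_dotProduct, smul_zero, sub_zero]

theorem mulVec_eq_zero_of_feedbackDissipation_mulVec_eq_zero (hR : Rᵀ = R)
    (hRt : (feedbackDissipation R B F).PosSemidef)
    (hrank : (feedbackDissipation R B F).rank = (fromCols R B).rank) {x : ι → ℝ}
    (hx : feedbackDissipation R B F *ᵥ x = 0) :
    R *ᵥ x = 0 ∧ x ᵥ* B = 0 ∧ B *ᵥ (F *ᵥ x) = 0 := by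
  have hx' : x ∈ LinearMap.ker (fromCols R B)ᵀ.mulVecLin := by
    rw [← ker_feedbackDissipation hRt hrank]
    exact hx
  obtain ⟨hxR, hxB⟩ : x ᵥ* R = 0 ∧ x ᵥ* B = 0 := by simpa [funext_iff, Sum.forall] using hx'
  have hRx : R *ᵥ x = 0 := by rw [← hR, mulVec_transpose, hxR]
  refine ⟨hRx, hxB, ?_⟩
  rw [feedbackDissipation_mulVec, hRx, hxB, mulVec_zero, add_zero, zero_sub, neg_eq_zero,
    smul_eq_zero] at hx
  exact hx.resolve_left (by norm_num)

theorem det_transpose_mul_feedback_mul_ne_zero [Fintype κ] [DecidableEq κ] {E : Matrix ι ι ℝ}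
    {N : Matrix ι κ ℝ} (hE : Eᵀ = E) (hJ : Jᵀ = -J) (hR : Rᵀ = R) (hEN : E * N = 0)
    (hNinj : Function.Injective N.mulVec)
    (hindex : (fromCols (fromCols E ((J - R) * N)) B).rank = Fintype.card ι)
    (hRt : (feedbackDissipation R B F).PosSemidef)
    (hrank : (feedbackDissipation R B F).rank = (fromCols R B).rank) :
    (Nᵀ * (J - R + B * F) * N).det ≠ 0 := by
  rw [Ne, ← exists_mulVec_eq_zero_iff]
  rintro ⟨z, hz0, hz⟩
  set x := N *ᵥ z
  have hRtx : feedbackDissipation R B F *ᵥ x = 0 := by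
    rw [← hRt.dotProduct_mulVec_zero_iff, star_trivial, ← neg_eq_zero,
      ← dotProduct_feedback_mulVec_self hJ, ← dotProduct_transpose_mul_mul_mulVec, hz,
      dotProduct_zero]
  obtain ⟨hRx, hxB, hBFx⟩ :=
    mulVec_eq_zero_of_feedbackDissipation_mulVec_eq_zero hR hRt hrank hRtx
  have hxE : x ᵥ* E = 0 := by
    rw [← mulVec_transpose, hE, mulVec_mulVec, hEN, zero_mulVec]
  have hxJRN : x ᵥ* ((J - R) * N) = 0 := by
    have hxJR : x ᵥ* (J - R) = -((J - R + B * F) *ᵥ x) := by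
      rw [← mulVec_transpose, transpose_sub, hJ, hR, add_mulVec, sub_mulVec, sub_mulVec,
        neg_mulVec, ← mulVec_mulVec, hRx, hBFx]
      abel
    rw [← vecMul_vecMul, hxJR, neg_vecMul, ← mulVec_transpose, mulVec_mulVec, mulVec_mulVec, hz,
      neg_zero]
  have hleft : x ᵥ* fromCols (fromCols E ((J - R) * N)) B = 0 := by
    rw [vecMul_fromCols, vecMul_fromCols, hxE, hxJRN, hxB, Sum.elim_zero_zero, Sum.elim_zero_zero]
  exact hz0 (hNinj ((eq_zero_of_vecMul_eq_zero_of_rank_eq_card hindex hleft).trans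
    (mulVec_zero N).symm))

end Feedback

end Matrix

/-- Lemma 2.3: regularization and index reduction by a structure-preserving
feedback. -/
theorem feedback_regular_index_one
    {n m k : ℕ}
    (E J R : Matrix (Fin n) (Fin n) ℝ) (B : Matrix (Fin n) (Fin m) ℝ)
    (hE : E.PosSemidef) (hJ : Jᵀ = -J) (hR : R.PosSemidef)
    -- KE : column-orthonormal basis of the kernel of E
    (KE : Matrix (Fin n) (Fin k) ℝ)
    (hKEorth : KEᵀ * KE = 1)
    (hKEker : LinearMap.range KE.mulVecLin = LinearMap.ker E.mulVecLin)
    (hindex : (fromCols (fromCols E ((J - R) * KE)) B).rank = n)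
    (F : Matrix (Fin m) (Fin n) ℝ)
    (hRt : (R - (1 / 2 : ℝ) • (B * F + Fᵀ * Bᵀ)).PosSemidef)
    (hrank : (R - (1 / 2 : ℝ) • (B * F + Fᵀ * Bᵀ)).rank = (fromCols R B).rank) :
    (Matrix.det ((Polynomial.X : Polynomial ℝ) • E.map Polynomial.C
        - (J - R + B * F).map Polynomial.C)) ≠ 0 ∧
    (Matrix.det ((Polynomial.X : Polynomial ℝ) • E.map Polynomial.C
        - (J - R + B * F).map Polynomial.C)).natDegree = E.rank := by
  have hKEinj : Function.Injective KE.mulVec := fun a b hab => by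
    simpa [mulVec_mulVec, hKEorth] using congrArg (KEᵀ *ᵥ ·) hab
  have hcompression : (KEᵀ * (J - R + B * F) * KE).det ≠ 0 :=
    det_transpose_mul_feedback_mul_ne_zero (isHermitian_iff_isSymm.mp hE.isHermitian).eq hJ
      (isHermitian_iff_isSymm.mp hR.isHermitian).eq (mul_eq_zero_of_range_le_ker hKEker.le)
      hKEinj (by rwa [Fintype.card_fin]) hRt hrank
  exact det_pencil_ne_zero_and_natDegree_eq_rank hE hKEker hKEinj hcompression
end

section
/- Let R ∈ ℝⁿˣⁿ be symmetric positive semidefinite and B ∈ ℝⁿˣᵐ. Then there exist a nonsingular matrix X ∈ ℝⁿˣⁿ and a nonsingular matrix Y ∈ ℝᵐˣᵐ such that XRXᵀ = diag(R₁₁, I_{n₂}, 0) with R₁₁ = R₁₁ᵀ ≥ 0 of size n₁, and XBYᵀ = [[I_{n₁}, 0],[0, 0],[0, 0]] (with block row sizes n₁, n₂, n₃ and column sizes n₁, m−n₁). -/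
/-!
First bring `B` to rank normal form `P B Qᵀ = [[I, 0], [0, 0]]` and replace `R` by the
congruent matrix `A = P R Pᵀ`. Every further transformation has the form `[[I, W], [0, D]]`,
which fixes `[[I, 0], [0, 0]]` from the left, so it only remains to compress `A`. Congruence by
`[[I, 0], [0, D]]` turns the lower right block of `A` into `[[I, 0], [0, 0]]`; since `A` stays
positive semidefinite, the off-diagonal block `S` vanishes against the zero diagonal block, and a
Schur-complement elimination with `[[I, -S], [0, I]]` clears `S`, leaving `R₁₁ = A₁₁ - S Sᵀ`.
-/

open Matrix Module
open scoped ComplexOrder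

theorem Module.Basis.sumExtend_apply_inl {K V ι : Type*} [DivisionRing K] [AddCommGroup V]
    [Module K V] {v : ι → V} (hv : LinearIndependent K v) (i : ι) :
    Basis.sumExtend hv (Sum.inl i) = v i := by
  simp only [Basis.sumExtend, Basis.reindex_apply, Basis.coe_extend]
  rfl

theorem LinearMap.exists_basis_toMatrix_eq_fromBlocks {K V W : Type*} [Field K]
    [AddCommGroup V] [Module K V] [FiniteDimensional K V]
    [AddCommGroup W] [Module K W] [FiniteDimensional K W] (f : V →ₗ[K] W) :
    ∃ (r m₂ n₂ : ℕ) (b : Basis (Fin r ⊕ Fin m₂) K V) (c : Basis (Fin r ⊕ Fin n₂) K W),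
      LinearMap.toMatrix b c f = fromBlocks 1 0 0 0 := by
  obtain ⟨C, hC⟩ := (LinearMap.ker f).exists_isCompl
  let bC := finBasis K C
  let b := (bC.prod (finBasis K (LinearMap.ker f))).map (Submodule.prodEquivOfIsCompl _ _ hC.symm)
  have hli : LinearIndependent K (fun i => f (bC i)) :=
    bC.linearIndependent.map' (f.domRestrict C)
      (LinearMap.ker_eq_bot.2 (LinearMap.injective_domRestrict_iff.2 hC.symm.disjoint))
  let c₀ := Basis.sumExtend hli
  have : Finite (Basis.sumExtendIndex hli) :=
    have := Module.Finite.finite_basis c₀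
    Finite.of_injective (Sum.inr (α := Fin (finrank K C))) Sum.inr_injective
  let c := c₀.reindex ((Equiv.refl _).sumCongr (Finite.equivFin _))
  have hb_inl (i) : f (b (Sum.inl i)) = c (Sum.inl i) := by
    simp only [b, c, Basis.map_apply, Basis.prod_apply, Sum.elim_inl, Function.comp_apply,
      Submodule.coe_prodEquivOfIsCompl', Basis.reindex_apply]
    rw [Equiv.sumCongr_symm, Equiv.sumCongr_apply, Sum.map_inl, Equiv.refl_symm,
      Equiv.refl_apply, Basis.sumExtend_apply_inl]
    simp
  have hb_inr (j) : f (b (Sum.inr j)) = 0 := by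
    simp [b]
  refine ⟨_, _, _, b, c, ?_⟩
  ext k (i | j)
  · rw [LinearMap.toMatrix_apply, hb_inl, c.repr_self]
    rcases k with k | k
    · rw [Finsupp.single_apply, fromBlocks_apply₁₁, one_apply]
      simp only [Sum.inl.injEq, eq_comm]
    · rw [Finsupp.single_eq_of_ne Sum.inr_ne_inl]; rfl
  · rw [LinearMap.toMatrix_apply, hb_inr, map_zero, Finsupp.zero_apply]
    rcases k with k | k <;> rfl

theorem Matrix.exists_rank_normal_form_rectangular {K ι κ : Type*} [Field K]
    [Fintype ι] [DecidableEq ι] [Fintype κ] [DecidableEq κ] (B : Matrix ι κ K) :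
    ∃ (r n₂ m₂ : ℕ) (P : Matrix (Fin r ⊕ Fin n₂) ι K) (P' : Matrix ι (Fin r ⊕ Fin n₂) K)
      (Q : Matrix (Fin r ⊕ Fin m₂) κ K) (Q' : Matrix κ (Fin r ⊕ Fin m₂) K),
      P * P' = 1 ∧ P' * P = 1 ∧ Q * Q' = 1 ∧ Q' * Q = 1 ∧ P * B * Qᵀ = fromBlocks 1 0 0 0 := by
  obtain ⟨r, m₂, n₂, b, c, hbc⟩ := (toLin' B).exists_basis_toMatrix_eq_fromBlocks
  refine ⟨r, n₂, m₂, c.toMatrix (Pi.basisFun K ι), (Pi.basisFun K ι).toMatrix c,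
    ((Pi.basisFun K κ).toMatrix b)ᵀ, (b.toMatrix (Pi.basisFun K κ))ᵀ,
    c.toMatrix_mul_toMatrix_flip _, Basis.toMatrix_mul_toMatrix_flip _ c,
    by rw [← transpose_mul, b.toMatrix_mul_toMatrix_flip, transpose_one],
    by rw [← transpose_mul, Basis.toMatrix_mul_toMatrix_flip, transpose_one], ?_⟩
  rw [transpose_transpose, ← hbc, ← basis_toMatrix_mul_linearMap_toMatrix_mul_basis_toMatrix b
    (Pi.basisFun K κ) c (Pi.basisFun K ι), ← Matrix.toLin_eq_toLin', LinearMap.toMatrix_toLin]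

theorem Matrix.exists_submatrix_diagonal_eq_fromBlocks {R ι : Type*} [Zero R] [One R]
    [Fintype ι] [DecidableEq ι] (s : Finset ι) :
    ∃ (k₂ k₃ : ℕ) (e : Fin k₂ ⊕ Fin k₃ ≃ ι),
      (diagonal fun i => if i ∈ s then (1 : R) else 0).submatrix e e = fromBlocks 1 0 0 0 := by
  have hcard : Fintype.card {i // i ∉ s} = Fintype.card ι - s.card := by
    rw [Fintype.card_subtype_compl, Fintype.card_coe]
  let e := ((Finset.equivFin s).symm.sumCongr (Fintype.equivFinOfCardEq hcard).symm).trans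
    (Equiv.sumCompl (· ∈ s))
  refine ⟨_, _, e, ?_⟩
  rw [← diagonal_one, ← diagonal_zero, fromBlocks_diagonal, submatrix_diagonal_equiv]
  congr 1
  funext i
  rcases i with i | i
  · simp [e]
  · simp [e, ((Fintype.equivFinOfCardEq hcard).symm i).2]

theorem Matrix.PosSemidef.mul_mul_transpose_same {R ι κ : Type*} [CommRing R] [PartialOrder R]
    [StarRing R] [TrivialStar R] [Fintype ι] [Finite κ] {M : Matrix ι ι R} (hM : M.PosSemidef)
    (X : Matrix κ ι R) : (X * M * Xᵀ).PosSemidef := by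
  simpa only [conjTranspose_eq_transpose_of_trivial] using hM.mul_mul_conjTranspose_same X

theorem Matrix.PosSemidef.apply_eq_zero_of_apply_self_eq_zero {𝕜 ι : Type*} [RCLike 𝕜]
    [Fintype ι] [DecidableEq ι] {M : Matrix ι ι 𝕜} (hM : M.PosSemidef) {j : ι} (hj : M j j = 0)
    (i : ι) : M i j = 0 := by
  have hq : star (Pi.single j 1) ⬝ᵥ M *ᵥ Pi.single j 1 = 0 := by
    simp [mulVec_single, hj]
  simpa [mulVec_single] using congrFun ((hM.dotProduct_mulVec_zero_iff _).mp hq) i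

theorem Matrix.PosSemidef.exists_mul_mul_transpose_eq_diagonal {ι : Type*} [Fintype ι]
    [DecidableEq ι] {M : Matrix ι ι ℝ} (hM : M.PosSemidef) :
    ∃ (D D' : Matrix ι ι ℝ) (s : Finset ι), D * D' = 1 ∧ D' * D = 1 ∧
      D * M * Dᵀ = diagonal fun i => if i ∈ s then 1 else 0 := by
  let U : Matrix ι ι ℝ := hM.1.eigenvectorUnitary
  let ev := hM.1.eigenvalues
  have hUMU : Uᵀ * M * U = diagonal ev := by
    simpa [Unitary.conjStarAlgAut_star_apply, star_eq_conjTranspose,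
      conjTranspose_eq_transpose_of_trivial] using hM.1.conjStarAlgAut_star_eigenvectorUnitary
  have hUUt : U * Uᵀ = 1 := by
    simpa [star_eq_conjTranspose, conjTranspose_eq_transpose_of_trivial] using
      mem_unitaryGroup_iff.mp hM.1.eigenvectorUnitary.2
  have hUtU : Uᵀ * U = 1 := by
    simpa [star_eq_conjTranspose, conjTranspose_eq_transpose_of_trivial] using
      mem_unitaryGroup_iff'.mp hM.1.eigenvectorUnitary.2
  let t : ι → ℝ := fun i => if ev i = 0 then 1 else (√(ev i))⁻¹
  have hpos {i} (h : ev i ≠ 0) : 0 < ev i := (hM.eigenvalues_nonneg i).lt_of_ne' h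
  have ht (i) : t i ≠ 0 := by
    by_cases h : ev i = 0
    · simp [t, h]
    · simp [t, h, Real.sqrt_ne_zero'.2 (hpos h)]
  refine ⟨diagonal t * Uᵀ, U * diagonal t⁻¹, Finset.univ.filter (ev · ≠ 0), ?_, ?_, ?_⟩
  · calc diagonal t * Uᵀ * (U * diagonal t⁻¹) = diagonal t * (Uᵀ * U) * diagonal t⁻¹ := by
          simp only [Matrix.mul_assoc]
      _ = 1 := by simp [hUtU, ht]
  · calc U * diagonal t⁻¹ * (diagonal t * Uᵀ) = U * (diagonal t⁻¹ * diagonal t) * Uᵀ := by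
          simp only [Matrix.mul_assoc]
      _ = 1 := by simp [hUUt, ht]
  · calc diagonal t * Uᵀ * M * (diagonal t * Uᵀ)ᵀ = diagonal t * (Uᵀ * M * U) * diagonal t := by
          simp only [transpose_mul, diagonal_transpose, transpose_transpose, Matrix.mul_assoc]
      _ = _ := by
        rw [hUMU, diagonal_mul_diagonal, diagonal_mul_diagonal]
        congr 1
        funext i
        by_cases h : ev i = 0
        · simp [t, h]
        · have hs : √(ev i) ≠ 0 := Real.sqrt_ne_zero'.2 (hpos h)
          simp [t, h]
          field_simp
          rw [Real.sq_sqrt (hpos h).le]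

theorem Matrix.PosSemidef.exists_mul_mul_transpose_eq_fromBlocks {ι : Type*} [Fintype ι]
    [DecidableEq ι] {M : Matrix ι ι ℝ} (hM : M.PosSemidef) :
    ∃ (k₂ k₃ : ℕ) (D : Matrix (Fin k₂ ⊕ Fin k₃) ι ℝ) (D' : Matrix ι (Fin k₂ ⊕ Fin k₃) ℝ),
      D * D' = 1 ∧ D' * D = 1 ∧ D * M * Dᵀ = fromBlocks 1 0 0 0 := by
  obtain ⟨D, D', s, hDD', hD'D, hDM⟩ := hM.exists_mul_mul_transpose_eq_diagonal
  obtain ⟨k₂, k₃, e, he⟩ := exists_submatrix_diagonal_eq_fromBlocks (R := ℝ) s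
  refine ⟨k₂, k₃, D.submatrix e id, D'.submatrix id e, ?_, ?_, ?_⟩
  · rw [← submatrix_mul _ _ _ _ _ Function.bijective_id, hDD', submatrix_one_equiv]
  · rw [submatrix_mul_equiv, hD'D, submatrix_id_id]
  · rw [transpose_submatrix, ← submatrix_id_id M, ← submatrix_mul _ _ _ _ _ Function.bijective_id,
      ← submatrix_mul _ _ _ _ _ Function.bijective_id, hDM, he]

theorem Matrix.PosSemidef.mul_fromBlocks_one_zero_eq_self {𝕜 l k₂ k₃ : Type*} [RCLike 𝕜]
    [Fintype l] [DecidableEq l] [Fintype k₂] [DecidableEq k₂] [Fintype k₃] [DecidableEq k₃]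
    {A : Matrix l l 𝕜} {S : Matrix l (k₂ ⊕ k₃) 𝕜} {C : Matrix (k₂ ⊕ k₃) l 𝕜}
    (hM : (fromBlocks A S C (fromBlocks 1 0 0 0)).PosSemidef) :
    S * (fromBlocks 1 0 0 0 : Matrix (k₂ ⊕ k₃) (k₂ ⊕ k₃) 𝕜) = S := by
  refine Matrix.ext fun i j => ?_
  rcases j with j | j
  · simp [mul_apply, Fintype.sum_sum_type, one_apply]
  · have := hM.apply_eq_zero_of_apply_self_eq_zero (j := Sum.inr (Sum.inr j)) (by simp)
      (Sum.inl i)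
    simp_all [mul_apply, Fintype.sum_sum_type]

theorem Matrix.fromBlocks_one_neg_zero_one_mul_mul_transpose {α l m : Type*} [CommRing α]
    [Fintype l] [DecidableEq l] [Fintype m] [DecidableEq m]
    {A : Matrix l l α} {S : Matrix l m α} {E : Matrix m m α} (hSE : S * E = S) (hE : Eᵀ = E) :
    fromBlocks 1 (-S) 0 1 * fromBlocks A S Sᵀ E * (fromBlocks 1 (-S) 0 1)ᵀ =
      fromBlocks (A - S * Sᵀ) 0 0 E := by
  have hES : E * Sᵀ = Sᵀ := by rw [← hE, ← transpose_mul, hSE]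
  simp [fromBlocks_transpose, fromBlocks_multiply, hSE, hES, sub_eq_add_neg]

theorem Matrix.PosSemidef.exists_block_compression {l κ : Type*} [Fintype l]
    [DecidableEq l] [Fintype κ] [DecidableEq κ] {A : Matrix (l ⊕ κ) (l ⊕ κ) ℝ}
    (hA : A.PosSemidef) :
    ∃ (k₂ k₃ : ℕ) (X : Matrix (l ⊕ (Fin k₂ ⊕ Fin k₃)) (l ⊕ κ) ℝ)
      (X' : Matrix (l ⊕ κ) (l ⊕ (Fin k₂ ⊕ Fin k₃)) ℝ) (R₁₁ : Matrix l l ℝ),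
      X * X' = 1 ∧ X' * X = 1 ∧ X.toBlocks₁₁ = 1 ∧ X.toBlocks₂₁ = 0 ∧ R₁₁.PosSemidef ∧
      X * A * Xᵀ = fromBlocks R₁₁ 0 0 (fromBlocks 1 0 0 0) := by
  obtain ⟨k₂, k₃, D, D', hDD', hD'D, hDA⟩ :=
    exists_mul_mul_transpose_eq_fromBlocks (M := A.toBlocks₂₂) (hA.submatrix Sum.inr)
  set E : Matrix (Fin k₂ ⊕ Fin k₃) (Fin k₂ ⊕ Fin k₃) ℝ := fromBlocks 1 0 0 0
  set S := A.toBlocks₁₂ * Dᵀ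
  have hA₂₁ : A.toBlocks₂₁ = A.toBlocks₁₂ᵀ := by
    ext i j
    simpa [toBlocks₂₁, toBlocks₁₂] using hA.isHermitian.apply (Sum.inl j) (Sum.inr i)
  -- Without explicit types, `fromBlocks … * A` can elaborate through `CStarMatrix`'s `HMul`.
  set X₂ : Matrix (l ⊕ (Fin k₂ ⊕ Fin k₃)) (l ⊕ κ) ℝ := fromBlocks 1 0 0 D
  have hM : X₂ * A * X₂ᵀ = fromBlocks A.toBlocks₁₁ S Sᵀ E := by
    conv_lhs => rw [← fromBlocks_toBlocks A]
    simp [X₂, fromBlocks_transpose, fromBlocks_multiply, hA₂₁, S, E, ← hDA, Matrix.mul_assoc]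
  have hSE : S * E = S :=
    (hM ▸ hA.mul_mul_transpose_same X₂).mul_fromBlocks_one_zero_eq_self
  have hE : Eᵀ = E := by simp [E, fromBlocks_transpose]
  set X₃ : Matrix (l ⊕ (Fin k₂ ⊕ Fin k₃)) (l ⊕ (Fin k₂ ⊕ Fin k₃)) ℝ := fromBlocks 1 (-S) 0 1
  set X : Matrix (l ⊕ (Fin k₂ ⊕ Fin k₃)) (l ⊕ κ) ℝ := fromBlocks 1 (-(S * D)) 0 D
  have hX : X = X₃ * X₂ := by simp [X, X₂, X₃, fromBlocks_multiply]
  have hXAX : X * A * Xᵀ = fromBlocks (A.toBlocks₁₁ - S * Sᵀ) 0 0 E := by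
    rw [hX, ← fromBlocks_one_neg_zero_one_mul_mul_transpose hSE hE, ← hM]
    simp only [X₃, transpose_mul, Matrix.mul_assoc]
  refine ⟨k₂, k₃, X, fromBlocks 1 S 0 D', _, ?_, ?_, by simp [X], by simp [X], ?_, hXAX⟩
  · simp [X, fromBlocks_multiply, hDD', Matrix.mul_assoc, fromBlocks_one]
  · simp [X, fromBlocks_multiply, hD'D, fromBlocks_one]
  · simpa using (hXAX ▸ hA.mul_mul_transpose_same X).submatrix Sum.inl

/-- Simultaneous block compression of a positive semidefinite matrix R and a
general matrix B. -/
theorem simultaneous_compression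
    {n m : ℕ}
    (R : Matrix (Fin n) (Fin n) ℝ) (B : Matrix (Fin n) (Fin m) ℝ)
    (hR : R.PosSemidef) :
    ∃ (n₁ n₂ n₃ m₂ : ℕ), n₁ + n₂ + n₃ = n ∧ n₁ + m₂ = m ∧
      ∃ (X : Matrix (Fin n₁ ⊕ (Fin n₂ ⊕ Fin n₃)) (Fin n) ℝ)
        (Xinv : Matrix (Fin n) (Fin n₁ ⊕ (Fin n₂ ⊕ Fin n₃)) ℝ)
        (Y : Matrix (Fin n₁ ⊕ Fin m₂) (Fin m) ℝ)
        (Yinv : Matrix (Fin m) (Fin n₁ ⊕ Fin m₂) ℝ)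
        (R₁₁ : Matrix (Fin n₁) (Fin n₁) ℝ),
        X * Xinv = 1 ∧ Xinv * X = 1 ∧ Y * Yinv = 1 ∧ Yinv * Y = 1 ∧
        R₁₁.PosSemidef ∧
        X * R * Xᵀ = fromBlocks R₁₁ 0 0 (fromBlocks 1 0 0 0) ∧
        X * B * Yᵀ = fromBlocks 1 0 0 0 := by
  obtain ⟨n₁, n', m₂, P, P', Y, Y', hPP', hP'P, hYY', hY'Y, hPBY⟩ :=
    exists_rank_normal_form_rectangular B
  obtain ⟨n₂, n₃, Z, Z', R₁₁, hZZ', hZ'Z, hZ₁₁, hZ₂₁, hR₁₁, hZR⟩ :=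
    (hR.mul_mul_transpose_same P).exists_block_compression
  have hX : Z * P * (P' * Z') = 1 := by
    rw [Matrix.mul_assoc, ← Matrix.mul_assoc P, hPP', Matrix.one_mul, hZZ']
  have hX' : P' * Z' * (Z * P) = 1 := by
    rw [Matrix.mul_assoc, ← Matrix.mul_assoc Z', hZ'Z, Matrix.one_mul, hP'P]
  have hn := square_of_invertible _ _ hX hX'
  have hm := square_of_invertible _ _ hYY' hY'Y
  simp only [Fintype.card_sum, Fintype.card_fin] at hn hm
  refine ⟨n₁, n₂, n₃, m₂, by omega, hm, Z * P, P' * Z', Y, Y', R₁₁, hX, hX', hYY', hY'Y, hR₁₁,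
    ?_, ?_⟩
  · rw [transpose_mul, ← hZR]
    simp only [Matrix.mul_assoc]
  · rw [Matrix.mul_assoc Z, Matrix.mul_assoc Z, hPBY, ← fromBlocks_toBlocks Z, hZ₁₁, hZ₂₁]
    simp [fromBlocks_multiply]
end

section
/- Let S ∈ ℝᵐˣᵐ be symmetric positive semidefinite and N ∈ ℝᵐˣᵐ skew-symmetric. Then there exists an orthogonal matrix U such that Uᵀ(S+N)U = [[D₁₁, D₁₂, 0],[−D₁₂ᵀ, D₂₂, 0],[0, 0, 0]] and UᵀSU = diag(S₁₁, 0, 0), where D₂₂ is skew-symmetric, the leading 2×2 block matrix [[D₁₁, D₁₂],[−D₁₂ᵀ, D₂₂]] is nonsingular, and S₁₁ is symmetric positive definite. -/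
/-!
If `(S + N) x = 0` then `xᵀ S x = xᵀ (S + N) x = 0` because `N` is skew, hence `S x = 0`: the
kernel of `D = S + N` lies in the kernel of `S`. Take `U = [U₁ U₂ U₃]` whose column blocks are
orthonormal bases of `(ker S)ᗮ`, `(ker D)ᗮ ⊓ ker S` and `ker D`. Then `S` kills `U₂` and `U₃`, `D`
kills `U₃`, and wherever `S` vanishes `Dᵀ = S - N` agrees with `-D`; this produces the block
`-D₁₂ᵀ`, the skew block `D₂₂` and the zero last block row. `S₁₁ = U₁ᵀ S U₁` is definite since
the range of `U₁` meets `ker S` trivially, and the leading block `[U₁ U₂]ᵀ D [U₁ U₂]` is invertible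
since the range of `[U₁ U₂]` meets `ker D` trivially.
-/

open Matrix WithLp

namespace Matrix

section CommRing

variable {R : Type*} [CommRing R] {n ι₁ ι₂ ι₃ : Type*} [Fintype n]

theorem transpose_fromCols_mul_mul_fromCols (A : Matrix n n R) (V : Matrix n ι₁ R)
    (W : Matrix n ι₂ R) :
    (fromCols V W)ᵀ * A * fromCols V W =
      fromBlocks (Vᵀ * A * V) (Vᵀ * A * W) (Wᵀ * A * V) (Wᵀ * A * W) := by
  rw [transpose_fromCols, fromRows_mul, fromRows_mul_fromCols]

theorem transpose_fromCols_mul_fromCols_eq_one [DecidableEq ι₁] [DecidableEq ι₂]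
    {V : Matrix n ι₁ R} {W : Matrix n ι₂ R} (hV : Vᵀ * V = 1) (hW : Wᵀ * W = 1)
    (hVW : Vᵀ * W = 0) : (fromCols V W)ᵀ * fromCols V W = 1 := by
  rw [transpose_fromCols, fromRows_mul_fromCols, hV, hW, hVW, ← transpose_transpose (Wᵀ * V),
    transpose_mul, transpose_transpose, hVW, transpose_zero, fromBlocks_one]

theorem transpose_mul_eq_zero_of_mul_eq_zero {S : Matrix n n R} (hS : Sᵀ = S)
    {V : Matrix n ι₁ R} (hSV : S * V = 0) : Vᵀ * S = 0 := by
  rw [← hS, ← transpose_mul, hSV, transpose_zero]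

theorem transpose_fromCols_mul_mul_fromCols_of_mul_eq_zero {S : Matrix n n R} (hS : Sᵀ = S)
    (V : Matrix n ι₁ R) {W : Matrix n ι₂ R} (hSW : S * W = 0) :
    (fromCols V W)ᵀ * S * fromCols V W = fromBlocks (Vᵀ * S * V) 0 0 0 := by
  rw [transpose_fromCols_mul_mul_fromCols, transpose_mul_eq_zero_of_mul_eq_zero hS hSW,
    Matrix.mul_assoc Vᵀ S W, hSW, Matrix.mul_zero, Matrix.zero_mul, Matrix.zero_mul]

theorem transpose_mul_add_eq_neg_transpose {S N : Matrix n n R} (hS : Sᵀ = S) (hN : Nᵀ = -N)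
    {V : Matrix n ι₁ R} (hSV : S * V = 0) : Vᵀ * (S + N) = -((S + N) * V)ᵀ := by
  rw [transpose_mul, transpose_add, hS, hN, Matrix.mul_add, Matrix.mul_add,
    transpose_mul_eq_zero_of_mul_eq_zero hS hSV]
  simp

theorem transpose_mul_add_mul_eq_neg_transpose {S N : Matrix n n R} (hS : Sᵀ = S)
    (hN : Nᵀ = -N) {V : Matrix n ι₁ R} (hSV : S * V = 0) (W : Matrix n ι₂ R) :
    Vᵀ * (S + N) * W = -(Wᵀ * (S + N) * V)ᵀ := by
  rw [transpose_mul_add_eq_neg_transpose hS hN hSV, Matrix.mul_assoc Wᵀ, transpose_mul Wᵀ,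
    transpose_transpose, Matrix.neg_mul]

theorem transpose_fromCols_mul_add_mul_fromCols_fromCols {S N : Matrix n n R} (hS : Sᵀ = S)
    (hN : Nᵀ = -N) (U₁ : Matrix n ι₁ R) {U₂ : Matrix n ι₂ R} {U₃ : Matrix n ι₃ R}
    (hSU₂ : S * U₂ = 0) (hSU₃ : S * U₃ = 0) (hU₃ : (S + N) * U₃ = 0) :
    (fromCols U₁ (fromCols U₂ U₃))ᵀ * (S + N) * fromCols U₁ (fromCols U₂ U₃) =
      fromBlocks (U₁ᵀ * (S + N) * U₁) (fromCols (U₁ᵀ * (S + N) * U₂) 0)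
        (fromRows (-(U₁ᵀ * (S + N) * U₂)ᵀ) 0) (fromBlocks (U₂ᵀ * (S + N) * U₂) 0 0 0) := by
  have hrow : U₃ᵀ * (S + N) = 0 := by
    rw [transpose_mul_add_eq_neg_transpose hS hN hSU₃, hU₃, transpose_zero, neg_zero]
  rw [transpose_fromCols_mul_mul_fromCols, transpose_fromCols_mul_mul_fromCols, mul_fromCols,
    transpose_fromCols, fromRows_mul, fromRows_mul,
    ← transpose_mul_add_mul_eq_neg_transpose hS hN hSU₂]
  simp only [Matrix.mul_assoc _ (S + N) U₃, hU₃, hrow, Matrix.mul_zero, Matrix.zero_mul]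

end CommRing

theorem isUnit_transpose_mul_mul {K n ι₁ ι₂ : Type*} [Field K] [Fintype n] [Fintype ι₁]
    [Fintype ι₂] [DecidableEq n] [DecidableEq ι₁] {A : Matrix n n K} {X : Matrix n ι₁ K}
    {Y : Matrix n ι₂ K} (hXY : X * Xᵀ + Y * Yᵀ = 1) (hX : Xᵀ * X = 1) (hYA : Yᵀ * A = 0)
    (hker : ∀ z, A *ᵥ z = 0 → Xᵀ *ᵥ z = 0) : IsUnit (Xᵀ * A * X) := by
  refine mulVec_injective_iff_isUnit.1 <|
    (injective_iff_map_eq_zero (Xᵀ * A * X).mulVecLin).2 fun x hx => ?_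
  rw [mulVecLin_apply] at hx
  have hAXx : A *ᵥ (X *ᵥ x) = 0 := by
    calc A *ᵥ (X *ᵥ x) = (X * Xᵀ + Y * Yᵀ) *ᵥ (A *ᵥ (X *ᵥ x)) := by rw [hXY, one_mulVec]
      _ = X *ᵥ ((Xᵀ * A * X) *ᵥ x) + Y *ᵥ ((Yᵀ * A) *ᵥ (X *ᵥ x)) := by
        simp only [mulVec_mulVec, Matrix.mul_assoc, Matrix.add_mul, add_mulVec]
      _ = 0 := by rw [hx, hYA, zero_mulVec, mulVec_zero, mulVec_zero, add_zero]
  calc x = (Xᵀ * X) *ᵥ x := by rw [hX, one_mulVec]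
    _ = 0 := by rw [← mulVec_mulVec, hker _ hAXx]

section Real

variable {n m : Type*} [Fintype n]

theorem mem_ker_toLpLin_iff [DecidableEq n] {A : Matrix n n ℝ} {z : EuclideanSpace ℝ n} :
    z ∈ LinearMap.ker (toLpLin 2 2 A) ↔ A *ᵥ ofLp z = 0 := by
  rw [LinearMap.mem_ker, toLpLin_apply, toLp_eq_zero]

theorem dotProduct_mulVec_self_eq_zero_of_transpose_eq_neg_s8 {N : Matrix n n ℝ} (hN : Nᵀ = -N)
    (x : n → ℝ) : x ⬝ᵥ (N *ᵥ x) = 0 := by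
  have h : x ⬝ᵥ (N *ᵥ x) = -(x ⬝ᵥ (N *ᵥ x)) := by
    conv_lhs => rw [dotProduct_mulVec, ← mulVec_transpose, hN, neg_mulVec, neg_dotProduct,
      dotProduct_comm]
  linarith

theorem PosSemidef.ker_toLpLin_add_le [DecidableEq n] {S N : Matrix n n ℝ} (hS : S.PosSemidef)
    (hN : Nᵀ = -N) : LinearMap.ker (toLpLin 2 2 (S + N)) ≤ LinearMap.ker (toLpLin 2 2 S) := by
  intro z hz
  rw [mem_ker_toLpLin_iff] at hz ⊢
  refine (hS.dotProduct_mulVec_zero_iff _).1 ?_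
  simpa [add_mulVec, dotProduct_mulVec_self_eq_zero_of_transpose_eq_neg_s8 hN] using
    congrArg (ofLp z ⬝ᵥ ·) hz

theorem PosSemidef.posDef_transpose_mul_mul [Fintype m] {S : Matrix n n ℝ} (hS : S.PosSemidef)
    {V : Matrix n m ℝ} (hV : ∀ x, S *ᵥ (V *ᵥ x) = 0 → x = 0) : (Vᵀ * S * V).PosDef := by
  have hVSV := hS.conjTranspose_mul_mul_same V
  rw [conjTranspose_eq_transpose_of_trivial] at hVSV
  refine .of_dotProduct_mulVec_pos hVSV.1 fun x hx =>
    (hVSV.dotProduct_mulVec_nonneg x).lt_of_ne fun h => hx (hV x ?_)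
  refine (hS.dotProduct_mulVec_zero_iff _).1 ?_
  simpa only [star_trivial, dotProduct_mulVec, vecMul_vecMul, ← mulVec_mulVec, vecMul_transpose]
    using h.symm

end Real

end Matrix

namespace Submodule

variable {n : Type*} [Fintype n]

noncomputable def orthonormalBasisMatrix (K : Submodule ℝ (EuclideanSpace ℝ n)) :
    Matrix n (Fin (Module.finrank ℝ K)) ℝ :=
  Matrix.of fun i j => (stdOrthonormalBasis ℝ K j : EuclideanSpace ℝ n) i

variable {K K' L : Submodule ℝ (EuclideanSpace ℝ n)}

theorem toLp_orthonormalBasisMatrix_mulVec_mem (x : Fin (Module.finrank ℝ K) → ℝ) :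
    toLp 2 (K.orthonormalBasisMatrix *ᵥ x) ∈ K := by
  have h : toLp 2 (K.orthonormalBasisMatrix *ᵥ x) =
      ∑ j, x j • (stdOrthonormalBasis ℝ K j : EuclideanSpace ℝ n) := by
    ext i
    simp [orthonormalBasisMatrix, mulVec, dotProduct, mul_comm]
  rw [h]
  exact sum_mem fun j _ => smul_mem _ _ (stdOrthonormalBasis ℝ K j).2

theorem orthonormalBasisMatrix_transpose_mulVec_apply (z : EuclideanSpace ℝ n)
    (j : Fin (Module.finrank ℝ K)) :
    (K.orthonormalBasisMatrixᵀ *ᵥ ofLp z) j =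
      inner ℝ (stdOrthonormalBasis ℝ K j : EuclideanSpace ℝ n) z := by
  simp [orthonormalBasisMatrix, mulVec, dotProduct, EuclideanSpace.inner_eq_star_dotProduct,
    mul_comm]

theorem orthonormalBasisMatrix_transpose_mulVec_eq_zero (h : K ⟂ L) {z : EuclideanSpace ℝ n}
    (hz : z ∈ L) : K.orthonormalBasisMatrixᵀ *ᵥ ofLp z = 0 := by
  ext j
  rw [orthonormalBasisMatrix_transpose_mulVec_apply]
  exact h.inner_eq (stdOrthonormalBasis ℝ K j).2 hz

theorem transpose_fromCols_orthonormalBasisMatrix_mulVec_eq_zero (hK : K ⟂ L) (hK' : K' ⟂ L)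
    {z : EuclideanSpace ℝ n} (hz : z ∈ L) :
    (fromCols K.orthonormalBasisMatrix K'.orthonormalBasisMatrix)ᵀ *ᵥ ofLp z = 0 := by
  rw [transpose_fromCols, fromRows_mulVec, orthonormalBasisMatrix_transpose_mulVec_eq_zero hK hz,
    orthonormalBasisMatrix_transpose_mulVec_eq_zero hK' hz, Sum.elim_zero_zero]

theorem orthonormalBasisMatrix_transpose_mul_eq_zero (h : K ⟂ L) :
    K.orthonormalBasisMatrixᵀ * L.orthonormalBasisMatrix = 0 := by
  refine ext_iff_mulVec.2 fun x => ?_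
  rw [← mulVec_mulVec, zero_mulVec]
  exact orthonormalBasisMatrix_transpose_mulVec_eq_zero h (toLp_orthonormalBasisMatrix_mulVec_mem x)

theorem orthonormalBasisMatrix_transpose_mul_self :
    K.orthonormalBasisMatrixᵀ * K.orthonormalBasisMatrix = 1 := by
  ext i j
  have hij : (K.orthonormalBasisMatrixᵀ * K.orthonormalBasisMatrix) i j =
      inner ℝ (stdOrthonormalBasis ℝ K i) (stdOrthonormalBasis ℝ K j) := by
    simp [orthonormalBasisMatrix, mul_apply, EuclideanSpace.inner_eq_star_dotProduct,
      dotProduct, mul_comm]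
  rw [hij, orthonormal_iff_ite.1 (stdOrthonormalBasis ℝ K).orthonormal, one_apply]

theorem transpose_fromCols_orthonormalBasisMatrix_mul_self (h : K ⟂ K') :
    (fromCols K.orthonormalBasisMatrix K'.orthonormalBasisMatrix)ᵀ *
      fromCols K.orthonormalBasisMatrix K'.orthonormalBasisMatrix = 1 :=
  transpose_fromCols_mul_fromCols_eq_one orthonormalBasisMatrix_transpose_mul_self
    orthonormalBasisMatrix_transpose_mul_self (orthonormalBasisMatrix_transpose_mul_eq_zero h)

theorem transpose_fromCols_fromCols_orthonormalBasisMatrix_mul_self (hK : K ⟂ K') (hL : K ⟂ L)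
    (hK'L : K' ⟂ L) :
    (fromCols K.orthonormalBasisMatrix
        (fromCols K'.orthonormalBasisMatrix L.orthonormalBasisMatrix))ᵀ *
      fromCols K.orthonormalBasisMatrix
        (fromCols K'.orthonormalBasisMatrix L.orthonormalBasisMatrix) = 1 := by
  refine transpose_fromCols_mul_fromCols_eq_one orthonormalBasisMatrix_transpose_mul_self
    (transpose_fromCols_orthonormalBasisMatrix_mul_self hK'L) ?_
  rw [mul_fromCols, orthonormalBasisMatrix_transpose_mul_eq_zero hK,
    orthonormalBasisMatrix_transpose_mul_eq_zero hL, fromCols_zero]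

theorem eq_zero_of_toLp_orthonormalBasisMatrix_mulVec_mem (h : K ⟂ L)
    {x : Fin (Module.finrank ℝ K) → ℝ} (hx : toLp 2 (K.orthonormalBasisMatrix *ᵥ x) ∈ L) :
    x = 0 := by
  rw [← one_mulVec x, ← orthonormalBasisMatrix_transpose_mul_self, ← mulVec_mulVec]
  exact orthonormalBasisMatrix_transpose_mulVec_eq_zero h hx

theorem mul_orthonormalBasisMatrix_eq_zero [DecidableEq n] {A : Matrix n n ℝ}
    (h : K ≤ LinearMap.ker (toLpLin 2 2 A)) : A * K.orthonormalBasisMatrix = 0 := by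
  refine ext_iff_mulVec.2 fun x => ?_
  rw [← mulVec_mulVec, zero_mulVec, ← mem_ker_toLpLin_iff]
  exact h (toLp_orthonormalBasisMatrix_mulVec_mem x)

theorem finrank_orthogonal_add_finrank_inf_add_finrank (h : L ≤ K) :
    Module.finrank ℝ Kᗮ + Module.finrank ℝ (Lᗮ ⊓ K : Submodule ℝ (EuclideanSpace ℝ n)) +
      Module.finrank ℝ L = Fintype.card n := by
  have hL := finrank_add_inf_finrank_orthogonal h
  have hK := finrank_add_finrank_orthogonal K
  rw [finrank_euclideanSpace] at hK
  omega

end Submodule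

open Matrix Submodule

/-- Structured staircase form of D = S + N with S = Sᵀ ≥ 0 and N = −Nᵀ. -/
theorem structured_staircase_form
    {m : ℕ}
    (S N : Matrix (Fin m) (Fin m) ℝ)
    (hS : S.PosSemidef) (hN : Nᵀ = -N) :
    ∃ (m₁ m₂ m₃ : ℕ), m₁ + m₂ + m₃ = m ∧
      ∃ (U : Matrix (Fin m) (Fin m₁ ⊕ (Fin m₂ ⊕ Fin m₃)) ℝ)
        (D₁₁ : Matrix (Fin m₁) (Fin m₁) ℝ)
        (D₁₂ : Matrix (Fin m₁) (Fin m₂) ℝ)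
        (D₂₂ : Matrix (Fin m₂) (Fin m₂) ℝ)
        (S₁₁ : Matrix (Fin m₁) (Fin m₁) ℝ),
        Uᵀ * U = 1 ∧ U * Uᵀ = 1 ∧
        D₂₂ᵀ = -D₂₂ ∧
        IsUnit (fromBlocks D₁₁ D₁₂ (-D₁₂ᵀ) D₂₂) ∧
        S₁₁.PosDef ∧
        Uᵀ * (S + N) * U =
          fromBlocks D₁₁ (fromCols D₁₂ 0)
            (fromRows (-D₁₂ᵀ) 0) (fromBlocks D₂₂ 0 0 0) ∧
        Uᵀ * S * U = fromBlocks S₁₁ 0 0 0 := by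
  have hSt : Sᵀ = S := (isHermitian_iff_isSymm.1 hS.isHermitian).eq
  set KS := LinearMap.ker (toLpLin 2 2 S)
  set KD := LinearMap.ker (toLpLin 2 2 (S + N))
  have hKD : KD ≤ KS := hS.ker_toLpLin_add_le hN
  have h₁₂ : KSᗮ ⟂ KDᗮ ⊓ KS := (isOrtho_orthogonal_left KS).mono_right inf_le_right
  have h₁₃ : KSᗮ ⟂ KD := (isOrtho_orthogonal_left KS).mono_right hKD
  have h₂₃ : KDᗮ ⊓ KS ⟂ KD := (isOrtho_orthogonal_left KD).mono_left inf_le_left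
  set U₁ := KSᗮ.orthonormalBasisMatrix
  set U₂ := (KDᗮ ⊓ KS).orthonormalBasisMatrix
  set U₃ := KD.orthonormalBasisMatrix
  have hSU₂ : S * U₂ = 0 := mul_orthonormalBasisMatrix_eq_zero inf_le_right
  have hSU₃ : S * U₃ = 0 := mul_orthonormalBasisMatrix_eq_zero hKD
  have hDU₃ : (S + N) * U₃ = 0 := mul_orthonormalBasisMatrix_eq_zero le_rfl
  have hdim := finrank_orthogonal_add_finrank_inf_add_finrank hKD
  rw [Fintype.card_fin] at hdim
  have hUtU := transpose_fromCols_fromCols_orthonormalBasisMatrix_mul_self h₁₂ h₁₃ h₂₃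
  have hUUt := (mul_eq_one_comm_of_card_eq _ _ _ (by simp [← hdim, add_assoc])).1 hUtU
  refine ⟨_, _, _, hdim, fromCols U₁ (fromCols U₂ U₃), U₁ᵀ * (S + N) * U₁,
    U₁ᵀ * (S + N) * U₂, U₂ᵀ * (S + N) * U₂, U₁ᵀ * S * U₁, hUtU, hUUt, ?_, ?_, ?_,
    transpose_fromCols_mul_add_mul_fromCols_fromCols hSt hN U₁ hSU₂ hSU₃ hDU₃,
    transpose_fromCols_mul_mul_fromCols_of_mul_eq_zero hSt U₁
      (by rw [mul_fromCols, hSU₂, hSU₃, fromCols_zero])⟩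
  · nth_rw 2 [transpose_mul_add_mul_eq_neg_transpose hSt hN hSU₂ U₂]
    rw [neg_neg]
  · rw [← transpose_mul_add_mul_eq_neg_transpose hSt hN hSU₂,
      ← transpose_fromCols_mul_mul_fromCols]
    refine isUnit_transpose_mul_mul (Y := U₃)
      (by simpa only [transpose_fromCols, fromCols_mul_fromRows, add_assoc] using hUUt)
      (transpose_fromCols_orthonormalBasisMatrix_mul_self h₁₂) ?_ fun z hz =>
        transpose_fromCols_orthonormalBasisMatrix_mulVec_eq_zero h₁₃ h₂₃ (z := toLp 2 z)
          (mem_ker_toLpLin_iff.2 hz)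
    rw [transpose_mul_add_eq_neg_transpose hSt hN hSU₃, hDU₃, transpose_zero, neg_zero]
  · exact hS.posDef_transpose_mul_mul fun x hx =>
      eq_zero_of_toLp_orthonormalBasisMatrix_mulVec_mem (isOrtho_orthogonal_left KS)
        (mem_ker_toLpLin_iff.2 hx)
end

section
/- Let D ∈ ℝᵐˣᵐ with symmetric part S = ½(D + Dᵀ) positive definite, let B ∈ ℝⁿˣᵐ, P ∈ ℝⁿˣᵐ, R ∈ ℝⁿˣⁿ symmetric. For F ∈ ℝᵐˣⁿ, the block matrix [[R − ½(BF + FᵀBᵀ), P + ½FᵀDᵀ],[Pᵀ + ½DF, S]] is positive definite for SOME F if and only if S > 0 and R + BD⁻¹Pᵀ + PD⁻ᵀBᵀ + BD⁻¹SD⁻ᵀBᵀ > 0; moreover, in the affirmative case F = −2D⁻¹(Pᵀ + SD⁻ᵀBᵀ) is such a choice. -/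
/-!
A positive definite symmetric part makes `D` invertible, since `D v = 0` forces
`vᵀ (D + Dᵀ) v = 0`. Taking the Schur complement of `S`, the closed-loop matrix is positive
definite iff `R - ½(BF + FᵀBᵀ) - C S⁻¹ Cᵀ` is, where `C = P + ½ FᵀDᵀ`. Completing the square,
this equals `M - G S⁻¹ Gᵀ` with `M = R + BD⁻¹Pᵀ + PD⁻ᵀBᵀ + BD⁻¹SD⁻ᵀBᵀ` independent of `F` and
`G = C + BD⁻¹S`. As `G S⁻¹ Gᵀ ⪰ 0`, a good `F` forces `M ≻ 0`; conversely the gain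
`F = -2 D⁻¹ (Pᵀ + S D⁻ᵀ Bᵀ)` makes `G = 0`.
-/

open Matrix
open scoped ComplexOrder

namespace Matrix

variable {ι κ : Type*} [Fintype κ] [DecidableEq κ]

section SchurComplement

variable [Fintype ι] {𝕜 : Type*} [RCLike 𝕜]

/-- Upgrades the semidefinite criterion `PosDef.fromBlocks₂₂` through
`det (fromBlocks A B Bᴴ D) = det D * det (A - B * D⁻¹ * Bᴴ)`. -/
theorem posDef_fromBlocks₂₂_iff (A : Matrix ι ι 𝕜) (B : Matrix ι κ 𝕜) {D : Matrix κ κ 𝕜}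
    (hD : D.PosDef) : (fromBlocks A B Bᴴ D).PosDef ↔ (A - B * D⁻¹ * Bᴴ).PosDef := by
  classical
  let _ := hD.isUnit.invertible
  have hdet : (fromBlocks A B Bᴴ D).det = D.det * (A - B * D⁻¹ * Bᴴ).det := by
    rw [det_fromBlocks₂₂, invOf_eq_nonsing_inv]
  constructor
  · intro h
    rw [((hD.fromBlocks₂₂ A B).mp h.posSemidef).posDef_iff_det_ne_zero]
    exact right_ne_zero_of_mul (hdet ▸ h.det_pos.ne')
  · intro h
    rw [((hD.fromBlocks₂₂ A B).mpr h.posSemidef).posDef_iff_det_ne_zero, hdet]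
    exact mul_ne_zero hD.det_pos.ne' h.det_pos.ne'

theorem isUnit_of_posDef_add_conjTranspose {D : Matrix κ κ 𝕜} (h : (D + Dᴴ).PosDef) :
    IsUnit D := by
  rw [isUnit_iff_isUnit_det, isUnit_iff_ne_zero, ne_eq, ← exists_mulVec_eq_zero_iff.not]
  rintro ⟨v, hv, hDv⟩
  have := h.dotProduct_mulVec_pos hv
  rw [add_mulVec, dotProduct_add, dotProduct_mulVec (star v) Dᴴ, ← star_mulVec, hDv] at this
  simp at this

end SchurComplement

section Feedback

variable {𝕜 : Type*} [Field 𝕜] (R : Matrix ι ι 𝕜) (B P : Matrix ι κ 𝕜) {D S : Matrix κ κ 𝕜}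

theorem feedback_schur_complement_eq (hD : IsUnit D) (hS : IsUnit S) (hS_symm : S.IsSymm)
    (F : Matrix κ ι 𝕜) :
    R - (1 / 2 : 𝕜) • (B * F + Fᵀ * Bᵀ)
        - (P + (1 / 2 : 𝕜) • Fᵀ * Dᵀ) * S⁻¹ * (P + (1 / 2 : 𝕜) • Fᵀ * Dᵀ)ᵀ
      = R + B * D⁻¹ * Pᵀ + P * (D⁻¹)ᵀ * Bᵀ + B * D⁻¹ * S * (D⁻¹)ᵀ * Bᵀ
        - (P + (1 / 2 : 𝕜) • Fᵀ * Dᵀ + B * D⁻¹ * S) * S⁻¹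
          * (P + (1 / 2 : 𝕜) • Fᵀ * Dᵀ + B * D⁻¹ * S)ᵀ := by
  rw [isUnit_iff_isUnit_det] at hD hS
  set C := P + (1 / 2 : 𝕜) • Fᵀ * Dᵀ
  have hBC : B * D⁻¹ * Cᵀ = B * D⁻¹ * Pᵀ + (1 / 2 : 𝕜) • (B * F) := by
    simp [C, Matrix.mul_add, Matrix.mul_assoc, nonsing_inv_mul_cancel_left _ _ hD]
  have hCB : C * (D⁻¹)ᵀ * Bᵀ = P * (D⁻¹)ᵀ * Bᵀ + (1 / 2 : 𝕜) • (Fᵀ * Bᵀ) := by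
    simpa [Matrix.mul_assoc] using congrArg transpose hBC
  have hsq : (C + B * D⁻¹ * S) * S⁻¹ * (C + B * D⁻¹ * S)ᵀ
      = C * S⁻¹ * Cᵀ + B * D⁻¹ * Cᵀ + C * (D⁻¹)ᵀ * Bᵀ + B * D⁻¹ * S * (D⁻¹)ᵀ * Bᵀ := by
    simp only [Matrix.mul_assoc, Matrix.add_mul, Matrix.mul_add, transpose_add, transpose_mul,
      hS_symm.eq, transpose_nonsing_inv, mul_nonsing_inv_cancel_left _ _ hS,
      nonsing_inv_mul_cancel_left _ _ hS]
    abel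
  rw [hsq, hBC, hCB]
  module

theorem feedback_offDiag_add_eq_zero [NeZero (2 : 𝕜)] (hD : IsUnit D) (hS_symm : S.IsSymm) :
    P + (1 / 2 : 𝕜) • ((-2 : 𝕜) • (D⁻¹ * (Pᵀ + S * (D⁻¹)ᵀ * Bᵀ)))ᵀ * Dᵀ + B * D⁻¹ * S = 0 := by
  have hDt : (D⁻¹)ᵀ * Dᵀ = 1 := by
    rw [← transpose_mul, mul_nonsing_inv _ ((isUnit_iff_isUnit_det D).mp hD), transpose_one]
  simp [Matrix.add_mul, Matrix.mul_assoc, hS_symm.eq, smul_smul, hDt,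
    inv_mul_cancel₀ (two_ne_zero (α := 𝕜))]

end Feedback

section RealFeedback

variable [Fintype ι] (R : Matrix ι ι ℝ) (B P : Matrix ι κ ℝ) {D S : Matrix κ κ ℝ}

theorem posDef_fromBlocks_feedback_iff (hD : IsUnit D) (hS : S.PosDef) (F : Matrix κ ι ℝ) :
    (fromBlocks (R - (1 / 2 : ℝ) • (B * F + Fᵀ * Bᵀ)) (P + (1 / 2 : ℝ) • Fᵀ * Dᵀ)
        (Pᵀ + (1 / 2 : ℝ) • D * F) S).PosDef ↔
      (R + B * D⁻¹ * Pᵀ + P * (D⁻¹)ᵀ * Bᵀ + B * D⁻¹ * S * (D⁻¹)ᵀ * Bᵀ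
        - (P + (1 / 2 : ℝ) • Fᵀ * Dᵀ + B * D⁻¹ * S) * S⁻¹
          * (P + (1 / 2 : ℝ) • Fᵀ * Dᵀ + B * D⁻¹ * S)ᵀ).PosDef := by
  have hC : Pᵀ + (1 / 2 : ℝ) • D * F = (P + (1 / 2 : ℝ) • Fᵀ * Dᵀ)ᴴ := by
    simp [conjTranspose_eq_transpose_of_trivial]
  rw [hC, posDef_fromBlocks₂₂_iff _ _ hS, conjTranspose_eq_transpose_of_trivial,
    feedback_schur_complement_eq R B P hD hS.isUnit (isHermitian_iff_isSymm.mp hS.isHermitian)]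

theorem posDef_of_posDef_fromBlocks_feedback (hD : IsUnit D) (hS : S.PosDef) {F : Matrix κ ι ℝ}
    (hF : (fromBlocks (R - (1 / 2 : ℝ) • (B * F + Fᵀ * Bᵀ)) (P + (1 / 2 : ℝ) • Fᵀ * Dᵀ)
        (Pᵀ + (1 / 2 : ℝ) • D * F) S).PosDef) :
    (R + B * D⁻¹ * Pᵀ + P * (D⁻¹)ᵀ * Bᵀ + B * D⁻¹ * S * (D⁻¹)ᵀ * Bᵀ).PosDef := by
  rw [posDef_fromBlocks_feedback_iff R B P hD hS] at hF
  have := hF.add_posSemidef (hS.inv.posSemidef.mul_mul_conjTranspose_same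
    (P + (1 / 2 : ℝ) • Fᵀ * Dᵀ + B * D⁻¹ * S))
  rwa [conjTranspose_eq_transpose_of_trivial, sub_add_cancel] at this

theorem posDef_fromBlocks_optimal_feedback (hD : IsUnit D) (hS : S.PosDef)
    (hM : (R + B * D⁻¹ * Pᵀ + P * (D⁻¹)ᵀ * Bᵀ + B * D⁻¹ * S * (D⁻¹)ᵀ * Bᵀ).PosDef) :
    (fromBlocks
        (R - (1 / 2 : ℝ) • (B * ((-2 : ℝ) • (D⁻¹ * (Pᵀ + S * (D⁻¹)ᵀ * Bᵀ)))
          + ((-2 : ℝ) • (D⁻¹ * (Pᵀ + S * (D⁻¹)ᵀ * Bᵀ)))ᵀ * Bᵀ))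
        (P + (1 / 2 : ℝ) • ((-2 : ℝ) • (D⁻¹ * (Pᵀ + S * (D⁻¹)ᵀ * Bᵀ)))ᵀ * Dᵀ)
        (Pᵀ + (1 / 2 : ℝ) • D * ((-2 : ℝ) • (D⁻¹ * (Pᵀ + S * (D⁻¹)ᵀ * Bᵀ))))
        S).PosDef := by
  rw [posDef_fromBlocks_feedback_iff R B P hD hS,
    feedback_offDiag_add_eq_zero B P hD (isHermitian_iff_isSymm.mp hS.isHermitian)]
  simpa using hM

end RealFeedback

end Matrix

theorem strict_passivity_feedback_characterization_general
    {n m : ℕ}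
    (D : Matrix (Fin m) (Fin m) ℝ)
    (S : Matrix (Fin m) (Fin m) ℝ)
    (hSdef : S = (1 / 2 : ℝ) • (D + Dᵀ))
    (hSpd : S.PosDef)
    (B P : Matrix (Fin n) (Fin m) ℝ)
    (R : Matrix (Fin n) (Fin n) ℝ) :
    ((∃ F : Matrix (Fin m) (Fin n) ℝ,
      (fromBlocks
          (R - (1 / 2 : ℝ) • (B * F + Fᵀ * Bᵀ))
          (P + (1 / 2 : ℝ) • Fᵀ * Dᵀ)
          (Pᵀ + (1 / 2 : ℝ) • D * F)
          S).PosDef)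
    ↔
    (S.PosDef ∧
      (R + B * D⁻¹ * Pᵀ + P * (D⁻¹)ᵀ * Bᵀ + B * D⁻¹ * S * (D⁻¹)ᵀ * Bᵀ).PosDef))
    ∧
    ((S.PosDef ∧
      (R + B * D⁻¹ * Pᵀ + P * (D⁻¹)ᵀ * Bᵀ + B * D⁻¹ * S * (D⁻¹)ᵀ * Bᵀ).PosDef) →
      (fromBlocks
          (R - (1 / 2 : ℝ) • (B * ((-2 : ℝ) • (D⁻¹ * (Pᵀ + S * (D⁻¹)ᵀ * Bᵀ)))
            + ((-2 : ℝ) • (D⁻¹ * (Pᵀ + S * (D⁻¹)ᵀ * Bᵀ)))ᵀ * Bᵀ))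
          (P + (1 / 2 : ℝ) • ((-2 : ℝ) • (D⁻¹ * (Pᵀ + S * (D⁻¹)ᵀ * Bᵀ)))ᵀ * Dᵀ)
          (Pᵀ + (1 / 2 : ℝ) • D * ((-2 : ℝ) • (D⁻¹ * (Pᵀ + S * (D⁻¹)ᵀ * Bᵀ))))
          S).PosDef) := by
  have hD : IsUnit D := isUnit_of_posDef_add_conjTranspose <| by
    have h2S : D + Dᴴ = (2 : ℝ) • S := by
      rw [hSdef, smul_smul, conjTranspose_eq_transpose_of_trivial]
      norm_num
    exact h2S ▸ hSpd.smul two_pos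
  have gain := posDef_fromBlocks_optimal_feedback R B P hD hSpd
  exact ⟨⟨fun ⟨_, hF⟩ => ⟨hSpd, posDef_of_posDef_fromBlocks_feedback R B P hD hSpd hF⟩,
    fun h => ⟨_, gain h.2⟩⟩, fun h => gain h.2⟩

/-- Key equivalence behind Theorem 3.2: existence of F making the closed-loop
dissipation matrix positive definite, with an explicit choice of F. -/
theorem strict_passivity_feedback_characterization
    {n m : ℕ}
    (D : Matrix (Fin m) (Fin m) ℝ)
    (S : Matrix (Fin m) (Fin m) ℝ)
    (hSdef : S = (1 / 2 : ℝ) • (D + Dᵀ))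
    (hSpd : S.PosDef)
    (B P : Matrix (Fin n) (Fin m) ℝ)
    (R : Matrix (Fin n) (Fin n) ℝ) (hR : Rᵀ = R) :
    ((∃ F : Matrix (Fin m) (Fin n) ℝ,
      (fromBlocks
          (R - (1 / 2 : ℝ) • (B * F + Fᵀ * Bᵀ))
          (P + (1 / 2 : ℝ) • Fᵀ * Dᵀ)
          (Pᵀ + (1 / 2 : ℝ) • D * F)
          S).PosDef)
    ↔
    (S.PosDef ∧
      (R + B * D⁻¹ * Pᵀ + P * (D⁻¹)ᵀ * Bᵀ + B * D⁻¹ * S * (D⁻¹)ᵀ * Bᵀ).PosDef))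
    ∧
    ((S.PosDef ∧
      (R + B * D⁻¹ * Pᵀ + P * (D⁻¹)ᵀ * Bᵀ + B * D⁻¹ * S * (D⁻¹)ᵀ * Bᵀ).PosDef) →
      (fromBlocks
          (R - (1 / 2 : ℝ) • (B * ((-2 : ℝ) • (D⁻¹ * (Pᵀ + S * (D⁻¹)ᵀ * Bᵀ)))
            + ((-2 : ℝ) • (D⁻¹ * (Pᵀ + S * (D⁻¹)ᵀ * Bᵀ)))ᵀ * Bᵀ))
          (P + (1 / 2 : ℝ) • ((-2 : ℝ) • (D⁻¹ * (Pᵀ + S * (D⁻¹)ᵀ * Bᵀ)))ᵀ * Dᵀ)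
          (Pᵀ + (1 / 2 : ℝ) • D * ((-2 : ℝ) • (D⁻¹ * (Pᵀ + S * (D⁻¹)ᵀ * Bᵀ))))
          S).PosDef) :=
  strict_passivity_feedback_characterization_general D S hSdef hSpd B P R
end
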